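/- arXiv:1010.6278 — 6 statements merged into one kernel-verified Lean document; each statement's English description precedes it below -/
import Mathlib

section
/- For each fixed positive integer k, the class Apex^k F has growth constant 2^k · e; that is, (|(Apex^k F)_n| / n!)^{1/n} → 2^k e as n → ∞. -/
open SimpleGraph Filter Real

def IsBlocker {V : Type*} (G : SimpleGraph V) (B : Set V) : Prop :=
  (G.induce Bᶜ).IsAcyclic

def HasDisjointCycles {V : Type*} (G : SimpleGraph V) (m : ℕ) : Prop :=
  ∃ c : Fin m → (Σ v : V, G.Walk v v),
    (∀ i, (c i).2.IsCycle) ∧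
    ∀ i j, i ≠ j → ∀ v, v ∈ (c i).2.support → v ∉ (c j).2.support

noncomputable def apexCount (n k : ℕ) : ℕ :=
  Nat.card {G : SimpleGraph (Fin n) // ∃ B : Finset (Fin n), B.card ≤ k ∧ IsBlocker G ↑B}

noncomputable def exCount (n k : ℕ) : ℕ :=
  Nat.card {G : SimpleGraph (Fin n) // ¬ HasDisjointCycles G k}

noncomputable def forestCount (n : ℕ) : ℕ :=
  Nat.card {G : SimpleGraph (Fin n) // G.IsAcyclic}

def IsSpike {V : Type*} (G : SimpleGraph V) (u v : V) : Prop :=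
  G.Adj u v ∧ (G.neighborSet u).ncard = 1 ∧ (G.neighborSet v).ncard = 2 ∧
  ¬ ∃ a b c : V, a ≠ b ∧ b ≠ c ∧ a ≠ c ∧ G.Adj a b ∧ G.Adj b c ∧ ¬ G.Adj a c ∧
      (G.connectedComponentMk u).supp = {a, b, c}

/-!
A graph with a blocker `B`, `|B| ≤ k`, is determined by `B` (at most `(n + 1) ^ k` choices), by
its edges at `B` (at most `2 ^ (k n)` choices) and by the forest `G - B`. Rooting every tree of a
forest, the forest is determined by its parent function, so there are at most `n ^ n ≤ e ^ n n!`
forests. This gives the upper bound `(n + 1) ^ k (2 ^ k e) ^ n n!`.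

Conversely, any forest on `n - k` vertices together with any edges from `k` further vertices gives
a graph in `Apex^k F`. Forests are counted from below by layered trees: below a root hang `H + 1`
layers of `s` vertices, each vertex choosing its parent in the layer above. Labelling such a tree
on `N + 1 = (H + 1) s + 1` vertices in all `N!` ways, each forest arises at most `s! ^ (H + 1)`
times (relabel inside the layers), which leaves about `N! (s ^ s / s!) ^ (N / s)` forests; and
`(s ^ s / s!) ^ (1 / s) → e` by Stirling's formula.
-/

open scoped Nat

namespace SimpleGraph

variable {V W : Type*}

def parentGraph (P : V → V) : SimpleGraph V := fromRel fun x y => P x = y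

lemma parentGraph_adj {P : V → V} {x y : V} :
    (parentGraph P).Adj x y ↔ x ≠ y ∧ (P x = y ∨ P y = x) :=
  fromRel_adj ..

namespace IsAcyclic

variable {G : SimpleGraph V}

lemma snd_eq_or_snd_eq (hG : G.IsAcyclic) {u v r : V} {p : G.Walk u r} {q : G.Walk v r}
    (hp : p.IsPath) (hq : q.IsPath) (h : G.Adj u v) : p.snd = v ∨ q.snd = u := by
  by_cases hv : v ∈ p.support
  · exact .inl (hG.eq_snd_of_adj_start hp h hv).symm
  · have hu : u ∈ q.support := by
      simpa using hG.mem_support_of_ne_mem_support_of_adj_of_isPath hq.reverse hp.reverse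
        h.symm (by simpa using hv)
    exact .inr (hG.eq_snd_of_adj_start hq h.symm hu).symm

lemma exists_eq_parentGraph (hG : G.IsAcyclic) : ∃ P : V → V, G = parentGraph P := by
  let root : V → V := fun v => (G.connectedComponentMk v).out
  have hroot : ∀ v, G.Reachable v (root v) := fun v =>
    ConnectedComponent.exact (Quot.out_eq (G.connectedComponentMk v)).symm
  choose path hpath using fun v => (hroot v).exists_isPath
  refine ⟨fun v => (path v).snd, ?_⟩
  ext u v
  rw [parentGraph_adj]
  constructor
  · intro h
    have hr : root v = root u := congrArg Quot.out (ConnectedComponent.sound h.reachable).symm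
    refine ⟨h.ne, ?_⟩
    have hpath' : ((path v).copy rfl hr).IsPath := by simpa using hpath v
    simpa using hG.snd_eq_or_snd_eq (hpath u) hpath' h
  · have hsnd : ∀ {a b : V} (p : G.Walk a b), p.Nil → p.snd = a := by rintro _ _ _ ⟨⟩; rfl
    rintro ⟨hne, h | h⟩ <;> subst h
    · exact (path u).adj_snd fun hnil => hne (hsnd _ hnil).symm
    · exact ((path v).adj_snd fun hnil => hne (hsnd _ hnil)).symm

end IsAcyclic

lemma card_isAcyclic_le [Finite V] :
    Nat.card {G : SimpleGraph V // G.IsAcyclic} ≤ Nat.card V ^ Nat.card V := by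
  choose P hP using fun G : {G : SimpleGraph V // G.IsAcyclic} => G.2.exists_eq_parentGraph
  have hinj : Function.Injective P := fun G G' h => Subtype.ext (by rw [hP G, hP G', h])
  simpa [Nat.card_fun] using Nat.card_le_card_of_injective P hinj

end SimpleGraph

section Height

variable {V W : Type*}

structure IsHeight (P : V → V) (L : V → ℕ) : Prop where
  eq_zero : ∀ v, P v = v → L v = 0
  succ_eq : ∀ v, P v ≠ v → L (P v) + 1 = L v

namespace IsHeight

variable {P P' : V → V} {L L' : V → ℕ}

lemma unique (h : IsHeight P L) (h' : IsHeight P L') : L = L' := by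
  suffices ∀ n v, L v = n → L v = L' v from funext fun v => this _ v rfl
  intro n
  induction n using Nat.strong_induction_on with
  | _ n ih =>
    intro v hv
    by_cases hP : P v = v
    · rw [h.eq_zero v hP, h'.eq_zero v hP]
    · have := h.succ_eq v hP
      have := h'.succ_eq v hP
      have := ih (L (P v)) (by omega) (P v) rfl
      omega

lemma conj (h : IsHeight P L) (e : V ≃ W) : IsHeight (e.conj P) (L ∘ e.symm) where
  eq_zero w hw := h.eq_zero _ (by simpa [← e.eq_symm_apply] using hw)
  succ_eq w hw := by
    simpa using h.succ_eq (e.symm w) (by simpa [← e.eq_symm_apply] using hw)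

lemma isAcyclic (h : IsHeight P L) : (parentGraph P).IsAcyclic := by
  classical
  intro v c hc
  obtain ⟨u, hu, hmax⟩ := c.support.toFinset.exists_max_image L ⟨v, by simp⟩
  rw [List.mem_toFinset] at hu
  set c' := c.rotate u hu
  have hc' : c'.IsCycle := hc.rotate hu
  -- on a cycle through a vertex of maximal height, both neighbours would be its parent
  have hparent : ∀ w ∈ c'.support, (parentGraph P).Adj u w → w = P u := by
    intro w hw hadj
    obtain ⟨hne, hPu | hPw⟩ := parentGraph_adj.mp hadj
    · exact hPu.symm
    · have hL := h.succ_eq w (by rw [hPw]; exact hne)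
      have := hmax w (by simpa [c'] using hw)
      rw [hPw] at hL
      omega
  have hnil := hc'.not_nil
  exact hc'.snd_ne_penultimate <|
    (hparent _ (c'.getVert_mem_support 1) (c'.adj_snd hnil)).trans
      (hparent _ (c'.getVert_mem_support _) (c'.adj_penultimate hnil).symm).symm

lemma eq_of_parentGraph_eq (h : IsHeight P L) (hfix : ∀ v, P v = v → P' v = v)
    (hG : parentGraph P = parentGraph P') : P = P' := by
  suffices ∀ n v, L v = n → P v = P' v from funext fun v => this _ v rfl
  intro n
  induction n using Nat.strong_induction_on with
  | _ n ih =>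
    intro v hv
    by_cases hP : P v = v
    · rw [hP, hfix v hP]
    have hL := h.succ_eq v hP
    have hadj : (parentGraph P').Adj v (P v) :=
      hG ▸ parentGraph_adj.mpr ⟨Ne.symm hP, .inl rfl⟩
    obtain ⟨-, h₁ | h₁⟩ := parentGraph_adj.mp hadj
    · exact h₁.symm
    · -- then `v` would be the parent of its own parent
      have h₂ := ih _ (by omega) (P v) rfl
      rw [← h₂] at h₁
      have := h.succ_eq (P v) (by rw [h₁]; exact Ne.symm hP)
      rw [h₁] at this
      omega

end IsHeight

end Height

section Blocker

variable {V W : Type*} {G : SimpleGraph V}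

lemma isBlocker_of_isAcyclic_comap {B : Set V} (f : W ↪ V) (hf : ∀ v ∉ B, v ∈ Set.range f)
    (h : (G.comap f).IsAcyclic) : IsBlocker G B := by
  choose g hg using fun x : ↥Bᶜ => hf x.1 x.2
  refine h.comap ⟨g, fun {x y} hxy => ?_⟩ fun x y hxy => Subtype.ext ?_
  · simpa [hg] using hxy
  · simpa [hg] using congrArg f hxy

lemma card_isBlocker_le [Fintype V] (B : Finset V) :
    Nat.card {G : SimpleGraph V // IsBlocker G B} ≤
      2 ^ (B.card * Fintype.card V) * Fintype.card V ^ Fintype.card V := by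
  classical
  let enc (G : {G : SimpleGraph V // IsBlocker G B}) :
      (B → V → Bool) × {F : SimpleGraph ↥(↑B : Set V)ᶜ // F.IsAcyclic} :=
    (fun b v => decide (G.1.Adj b v), ⟨G.1.induce _, G.2⟩)
  have hinj : Function.Injective enc := by
    rintro ⟨G, hG⟩ ⟨G', hG'⟩ h
    simp only [enc, Prod.mk.injEq] at h
    obtain ⟨hrow, hF⟩ := h
    ext u v
    by_cases hu : u ∈ B
    · simpa using congrFun (congrFun hrow ⟨u, hu⟩) v
    by_cases hv : v ∈ B
    · simpa [adj_comm] using congrFun (congrFun hrow ⟨v, hv⟩) u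
    · have hu' : u ∈ (↑B : Set V)ᶜ := hu
      have hv' : v ∈ (↑B : Set V)ᶜ := hv
      simpa using congrArg (fun F : SimpleGraph _ => F.Adj ⟨u, hu'⟩ ⟨v, hv'⟩)
        (congrArg Subtype.val hF)
  have hsub : Nat.card ↥(↑B : Set V)ᶜ ≤ Fintype.card V :=
    (Nat.card_le_card_of_injective _ Subtype.val_injective).trans_eq Nat.card_eq_fintype_card
  calc _ ≤ _ := Nat.card_le_card_of_injective enc hinj
    _ = 2 ^ (B.card * Fintype.card V) *
          Nat.card {F : SimpleGraph ↥(↑B : Set V)ᶜ // F.IsAcyclic} := by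
      rw [Nat.card_prod, Nat.card_fun, Nat.card_fun]
      simp [← pow_mul, mul_comm]
    _ ≤ _ := Nat.mul_le_mul_left _ (card_isAcyclic_le.trans (Nat.pow_self_mono hsub))

end Blocker

lemma card_finset_card_le_le_pow (α : Type*) [Fintype α] (k : ℕ) :
    Nat.card {B : Finset α // B.card ≤ k} ≤ (Fintype.card α + 1) ^ k := by
  classical
  let g (f : Fin k → Option α) : {B : Finset α // B.card ≤ k} :=
    ⟨(Finset.univ.image f).eraseNone,
      (Finset.card_eraseNone_le _).trans (Finset.card_image_le.trans (by simp))⟩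
  have hg : Function.Surjective g := by
    rintro ⟨B, hB⟩
    refine ⟨fun i => B.toList[(i : ℕ)]?, Subtype.ext ?_⟩
    ext x
    simp only [g, Finset.mem_eraseNone, Finset.mem_image, Finset.mem_univ, true_and]
    constructor
    · rintro ⟨i, hi⟩
      exact Finset.mem_toList.mp (List.mem_of_getElem? hi)
    · intro hx
      obtain ⟨i, hi⟩ := List.mem_iff_getElem?.mp (Finset.mem_toList.mpr hx)
      have : i < k := (List.getElem?_eq_some_iff.mp hi).1.trans_le (by simpa using hB)
      exact ⟨⟨i, this⟩, hi⟩
  simpa [Nat.card_fun] using Nat.card_le_card_of_surjective g hg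

lemma apexCount_le (n k : ℕ) : apexCount n k ≤ (n + 1) ^ k * (2 ^ (k * n) * n ^ n) := by
  let forget (x : Σ B : {B : Finset (Fin n) // B.card ≤ k},
      {G : SimpleGraph (Fin n) // IsBlocker G B.1}) :
      {G : SimpleGraph (Fin n) // ∃ B : Finset (Fin n), B.card ≤ k ∧ IsBlocker G ↑B} :=
    ⟨x.2.1, x.1.1, x.1.2, x.2.2⟩
  have hforget : Function.Surjective forget := by
    rintro ⟨G, B, hB, hG⟩
    exact ⟨⟨⟨B, hB⟩, G, hG⟩, rfl⟩
  have hB : ∀ B : {B : Finset (Fin n) // B.card ≤ k},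
      Nat.card {G : SimpleGraph (Fin n) // IsBlocker G B.1} ≤ 2 ^ (k * n) * n ^ n := fun B => by
    simpa using (card_isBlocker_le B.1).trans
      (Nat.mul_le_mul_right _ (Nat.pow_le_pow_right two_pos (Nat.mul_le_mul_right _ B.2)))
  calc apexCount n k ≤ _ := Nat.card_le_card_of_surjective forget hforget
    _ = ∑ B, Nat.card {G : SimpleGraph (Fin n) // IsBlocker G _} := Nat.card_sigma
    _ ≤ Nat.card {B : Finset (Fin n) // B.card ≤ k} * (2 ^ (k * n) * n ^ n) := by
      rw [Nat.card_eq_fintype_card, ← smul_eq_mul, ← Finset.card_univ, ← Finset.sum_const]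
      exact Finset.sum_le_sum fun B _ => hB B
    _ ≤ _ := Nat.mul_le_mul_right _ (by simpa using card_finset_card_le_le_pow (Fin n) k)

section ApexJoin

variable {V W : Type*}

def apexJoin (F : SimpleGraph V) (A : W → V → Bool) : SimpleGraph (V ⊕ W) where
  Adj
    | .inl a, .inl b => F.Adj a b
    | .inl a, .inr w => A w a
    | .inr w, .inl a => A w a
    | .inr _, .inr _ => False
  symm := ⟨by rintro (a | w) (b | x) h <;> simp_all [F.adj_comm]⟩
  loopless := ⟨by rintro (a | w) h <;> simp_all⟩

lemma forestCount_mul_le_apexCount (m k : ℕ) :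
    forestCount m * 2 ^ (k * m) ≤ apexCount (m + k) k := by
  let join (F : SimpleGraph (Fin m)) (A : Fin k → Fin m → Bool) : SimpleGraph (Fin (m + k)) :=
    (apexJoin F A).comap finSumFinEquiv.symm
  have hjoin_castAdd : ∀ F A, (join F A).comap (Fin.castAdd k) = F := fun F A => by
    ext a b
    simp [join, apexJoin]
  have hjoin_apex : ∀ F A a w, (join F A).Adj (Fin.castAdd k a) (Fin.natAdd m w) ↔ A w a := by
    simp [join, apexJoin]
  have hblocker : ∀ F : SimpleGraph (Fin m), F.IsAcyclic → ∀ A,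
      IsBlocker (join F A) ↑(Finset.univ.map (Fin.natAddEmb m (m := k))) := by
    intro F hF A
    refine isBlocker_of_isAcyclic_comap (Fin.castAddEmb k) (fun v hv => ?_) (by
      simpa [hjoin_castAdd] using hF)
    induction v using Fin.addCases with
    | left a => exact ⟨a, rfl⟩
    | right w => simp at hv
  let enc (x : {F : SimpleGraph (Fin m) // F.IsAcyclic} × (Fin k → Fin m → Bool)) :
      {G : SimpleGraph (Fin (m + k)) //
        ∃ B : Finset (Fin (m + k)), B.card ≤ k ∧ IsBlocker G ↑B} :=
    ⟨join x.1.1 x.2, _, by simp, hblocker x.1.1 x.1.2 x.2⟩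
  have hinj : Function.Injective enc := by
    rintro ⟨⟨F, hF⟩, A⟩ ⟨⟨F', hF'⟩, A'⟩ h
    have hG : join F A = join F' A' := congrArg Subtype.val h
    have hF : F = F' := by rw [← hjoin_castAdd F A, ← hjoin_castAdd F' A', hG]
    have hA : A = A' := by
      funext w a
      simpa [hjoin_apex] using congrArg (fun G => G.Adj (Fin.castAdd k a) (Fin.natAdd m w)) hG
    subst hF hA
    rfl
  simpa [forestCount, apexCount, Nat.card_prod, Nat.card_fun, ← pow_mul, mul_comm k m] using
    Nat.card_le_card_of_injective enc hinj

end ApexJoin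

section LabelledTrees

variable {X Y ι : Type*} [Fintype X] [Fintype Y]

noncomputable def sumLabel (e : X ≃ Fin (Fintype.card X)) :
    X ⊕ Y ≃ Fin (Fintype.card X + Fintype.card Y) :=
  (Equiv.sumCongr e (Fintype.equivFin Y)).trans finSumFinEquiv

@[simp]
lemma sumLabel_inl (e : X ≃ Fin (Fintype.card X)) (x : X) :
    sumLabel (Y := Y) e (.inl x) = Fin.castAdd _ (e x) := rfl

@[simp]
lemma sumLabel_inr (e : X ≃ Fin (Fintype.card X)) (y : Y) :
    sumLabel e (.inr y) = Fin.natAdd _ (Fintype.equivFin Y y) := rfl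

noncomputable def labelledTree (P : ι → X ⊕ Y → X ⊕ Y) (d : (X ≃ Fin (Fintype.card X)) × ι) :
    SimpleGraph (Fin (Fintype.card X + Fintype.card Y)) :=
  parentGraph ((sumLabel d.1).conj (P d.2))

variable {P : ι → X ⊕ Y → X ⊕ Y} {L : X ⊕ Y → ℕ}

lemma conj_eq_of_labelledTree_eq (hL : ∀ i, IsHeight (P i) L)
    (hY : ∀ i y, P i (.inr y) = .inr y) (hX : ∀ i x, P i (.inl x) ≠ .inl x)
    {d d' : (X ≃ Fin (Fintype.card X)) × ι}
    (h : labelledTree P d = labelledTree P d') :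
    (sumLabel d.1).conj (P d.2) = (sumLabel d'.1).conj (P d'.2) := by
  refine (hL d.2).conj _ |>.eq_of_parentGraph_eq (fun v hv => ?_) h
  obtain ⟨y, rfl⟩ : ∃ y, sumLabel d.1 (.inr y) = v := by
    rcases hz : (sumLabel d.1).symm v with x | y
    · exact absurd (by simpa [Equiv.conj_apply, hz, ← Equiv.eq_symm_apply] using hv) (hX _ x)
    · exact ⟨y, by rw [← hz, Equiv.apply_symm_apply]⟩
  rw [show sumLabel d.1 (.inr y) = sumLabel d'.1 (.inr y) from rfl, Equiv.conj_apply,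
    Equiv.symm_apply_apply, hY]

lemma height_inl_eq_of_labelledTree_eq (hL : ∀ i, IsHeight (P i) L)
    (hY : ∀ i y, P i (.inr y) = .inr y) (hX : ∀ i x, P i (.inl x) ≠ .inl x)
    {d d' : (X ≃ Fin (Fintype.card X)) × ι}
    (h : labelledTree P d = labelledTree P d') (x : X) :
    L (.inl (d'.1.symm (d.1 x))) = L (.inl x) := by
  have hheight : L ∘ (sumLabel d.1).symm = L ∘ (sumLabel d'.1).symm :=
    ((hL d.2).conj _).unique (conj_eq_of_labelledTree_eq hL hY hX h ▸ (hL d'.2).conj _)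
  have hlabel : sumLabel d.1 (.inl x) = sumLabel (Y := Y) d'.1 (.inl (d'.1.symm (d.1 x))) := by
    simp
  have := congrFun hheight (sumLabel d.1 (.inl x))
  rwa [Function.comp_apply, Function.comp_apply, Equiv.symm_apply_apply, hlabel,
    Equiv.symm_apply_apply, eq_comm] at this

open Classical in
lemma card_labelledTree_fibre_le [DecidableEq X] [Fintype ι] (hP : Function.Injective P)
    (hL : ∀ i, IsHeight (P i) L)
    (hY : ∀ i y, P i (.inr y) = .inr y) (hX : ∀ i x, P i (.inl x) ≠ .inl x)
    (d₀ : (X ≃ Fin (Fintype.card X)) × ι) :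
    (Finset.univ.filter (labelledTree P · = labelledTree P d₀)).card ≤
      Fintype.card {σ : Equiv.Perm X // L ∘ Sum.inl ∘ σ = L ∘ Sum.inl} := by
  classical
  rw [Fintype.card_subtype]
  refine Finset.card_le_card_of_injOn (fun d => d.1.trans d₀.1.symm) (fun d hd => ?_)
    (fun d hd d' hd' hdd => ?_)
  · simp only [Finset.coe_filter, Finset.mem_univ, true_and, Set.mem_ofPred_eq] at hd ⊢
    funext x
    exact height_inl_eq_of_labelledTree_eq hL hY hX hd x
  · simp only [Finset.coe_filter, Finset.mem_univ, true_and, Set.mem_ofPred_eq] at hd hd'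
    have he : d.1 = d'.1 := Equiv.ext fun x => by
      simpa using congrArg (fun σ : Equiv.Perm X => d₀.1 (σ x)) hdd
    have hc := (conj_eq_of_labelledTree_eq hL hY hX hd).trans
      (conj_eq_of_labelledTree_eq hL hY hX hd').symm
    rw [he] at hc
    exact Prod.ext he (hP ((Equiv.conj _).injective hc))

/-- Double counting: every labelled copy of a shape `P i` is a forest, and a forest arises from at
most as many labellings as `X` has height-preserving permutations. -/
theorem card_mul_factorial_le_forestCount_mul [DecidableEq X] [Fintype ι]
    (hP : Function.Injective P) (hL : ∀ i, IsHeight (P i) L)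
    (hY : ∀ i y, P i (.inr y) = .inr y) (hX : ∀ i x, P i (.inl x) ≠ .inl x) :
    Fintype.card ι * (Fintype.card X)! ≤ forestCount (Fintype.card X + Fintype.card Y) *
      Fintype.card {σ : Equiv.Perm X // L ∘ Sum.inl ∘ σ = L ∘ Sum.inl} := by
  classical
  have himage : (Finset.univ.image (labelledTree P)).card ≤
      forestCount (Fintype.card X + Fintype.card Y) := by
    calc _ ≤ (Finset.univ.filter fun G : SimpleGraph _ => G.IsAcyclic).card :=
          Finset.card_le_card fun T hT => by
            obtain ⟨d, -, rfl⟩ := Finset.mem_image.mp hT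
            simp only [Finset.mem_filter, Finset.mem_univ, true_and]
            exact ((hL d.2).conj (sumLabel d.1)).isAcyclic
      _ = _ := by rw [forestCount, Nat.card_eq_fintype_card, Fintype.card_subtype]
  calc Fintype.card ι * (Fintype.card X)! = (Finset.univ : Finset ((X ≃ Fin _) × ι)).card := by
        rw [Finset.card_univ, Fintype.card_prod, Fintype.card_equiv (Fintype.equivFin X),
          mul_comm]
    _ ≤ _ := Finset.card_le_mul_card_image (f := labelledTree P) _ _ fun T hT => by
        obtain ⟨d₀, -, rfl⟩ := Finset.mem_image.mp hT
        exact card_labelledTree_fibre_le hP hL hY hX d₀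
    _ ≤ _ := by rw [mul_comm]; exact Nat.mul_le_mul_right _ himage

end LabelledTrees

section Layered

variable {H s : ℕ}

/-- The shape of a layered tree: the vertex `(b + 1, i)` hangs below `(b, q (b, i))`, the vertices
of layer `0` hang below the root `inr 0`, and the other vertices `inr y` are isolated. -/
def layeredParent (r : ℕ) (q : Fin H × Fin s → Fin s) :
    (Fin (H + 1) × Fin s) ⊕ Fin (r + 1) → (Fin (H + 1) × Fin s) ⊕ Fin (r + 1)
  | .inl (b, i) => Fin.cases (.inr 0) (fun c => .inl (c.castSucc, q (c, i))) b
  | .inr y => .inr y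

def layeredHeight (H s r : ℕ) : (Fin (H + 1) × Fin s) ⊕ Fin (r + 1) → ℕ :=
  Sum.elim (fun x => x.1 + 1) 0

lemma layeredParent_inl_ne (r : ℕ) (q : Fin H × Fin s → Fin s) (x : Fin (H + 1) × Fin s) :
    layeredParent r q (.inl x) ≠ .inl x := by
  obtain ⟨b, i⟩ := x
  cases b using Fin.cases with
  | zero => simp [layeredParent]
  | succ c => simp [layeredParent, Fin.ext_iff]

lemma isHeight_layeredParent (r : ℕ) (q : Fin H × Fin s → Fin s) :
    IsHeight (layeredParent r q) (layeredHeight H s r) where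
  eq_zero
    | .inl x, h => absurd h (layeredParent_inl_ne r q x)
    | .inr _, _ => rfl
  succ_eq
    | .inl (b, i), _ => by
      cases b using Fin.cases with
      | zero => simp [layeredParent, layeredHeight]
      | succ c => simp [layeredParent, layeredHeight]
    | .inr _, h => absurd rfl h

lemma layeredParent_injective (r : ℕ) :
    Function.Injective (layeredParent (H := H) (s := s) r) := by
  intro q q' h
  funext ⟨c, i⟩
  simpa [layeredParent] using congrFun h (.inl (c.succ, i))

lemma card_stabilizer_layeredHeight (r : ℕ) :
    Fintype.card {σ : Equiv.Perm (Fin (H + 1) × Fin s) //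
        layeredHeight H s r ∘ Sum.inl ∘ σ = layeredHeight H s r ∘ Sum.inl} =
      s ! ^ (H + 1) := by
  have hfst : ∀ σ : Equiv.Perm (Fin (H + 1) × Fin s),
      layeredHeight H s r ∘ Sum.inl ∘ σ = layeredHeight H s r ∘ Sum.inl ↔
        Prod.fst ∘ σ = Prod.fst := by
    intro σ
    simp [funext_iff, layeredHeight, Fin.ext_iff]
  have hlayer : ∀ b, Fintype.card {x : Fin (H + 1) × Fin s // x.1 = b} = s := fun b =>
    (Fintype.card_congr ⟨fun x => x.1.2, fun i => ⟨(b, i), rfl⟩,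
      fun ⟨_, h⟩ => by subst h; rfl, fun _ => rfl⟩).trans (Fintype.card_fin s)
  simp_rw [hfst]
  rw [DomMulAct.stabilizer_card]
  simp [hlayer]

lemma factorial_mul_pow_le_forestCount (H s r : ℕ) :
    ((H + 1) * s)! * s ^ (H * s) ≤ forestCount ((H + 1) * s + (r + 1)) * s ! ^ (H + 1) := by
  have := card_mul_factorial_le_forestCount_mul (layeredParent_injective (H := H) (s := s) r)
    (isHeight_layeredParent r) (fun _ _ => rfl) (layeredParent_inl_ne r)
  simpa [card_stabilizer_layeredHeight, mul_comm] using this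

end Layered

section Asymptotics

lemma tendsto_mul_pow_rpow_inv {C : ℝ} (hC : 0 < C) (d : ℕ) :
    Tendsto (fun n : ℕ => (C * ((n : ℝ) + 1) ^ d) ^ (n : ℝ)⁻¹) atTop (nhds 1) := by
  have hlog : Tendsto (fun n : ℕ => Real.log ((n : ℝ) + 1) / n) atTop (nhds 0) := by
    have := (tendsto_pow_log_div_mul_add_atTop 1 (-1) 1 one_ne_zero).comp
      (tendsto_atTop_add_const_right _ 1 tendsto_natCast_atTop_atTop)
    simpa [Function.comp_def] using this
  have hexp : Tendsto (fun n : ℕ => (Real.log C + d * Real.log ((n : ℝ) + 1)) / n) atTop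
      (nhds 0) := by
    have hd : Tendsto (fun n : ℕ => (d : ℝ) * (Real.log ((n : ℝ) + 1) / n)) atTop (nhds 0) := by
      simpa using hlog.const_mul (d : ℝ)
    simpa [add_div, mul_div_assoc] using
      (tendsto_const_div_atTop_nhds_zero_nat (Real.log C)).add hd
  have := (Real.continuous_exp.tendsto 0).comp hexp
  rw [Real.exp_zero] at this
  refine this.congr fun n => ?_
  rw [Function.comp_apply, Real.rpow_def_of_pos (by positivity),
    Real.log_mul hC.ne' (by positivity), Real.log_pow, div_eq_mul_inv]

theorem tendsto_rpow_inv_of_bounds {a : ℕ → ℝ} {γ : ℝ} (ha : ∀ n, 0 ≤ a n) (hγ : 0 ≤ γ)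
    (hup : ∃ C > 0, ∃ d : ℕ, ∀ᶠ n : ℕ in atTop, a n ≤ C * ((n : ℝ) + 1) ^ d * γ ^ n)
    (hlow : ∀ q, 0 < q → q < γ →
      ∃ C > 0, ∃ d : ℕ, ∀ᶠ n : ℕ in atTop, q ^ n ≤ C * ((n : ℝ) + 1) ^ d * a n) :
    Tendsto (fun n : ℕ => a n ^ (n : ℝ)⁻¹) atTop (nhds γ) := by
  rw [tendsto_order]
  constructor
  · intro b hb
    rcases lt_or_ge b 0 with hb0 | hb0
    · exact .of_forall fun n => hb0.trans_le (Real.rpow_nonneg (ha n) _)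
    obtain ⟨q, hbq, hqγ⟩ := exists_between hb
    have hq : 0 < q := hb0.trans_lt hbq
    obtain ⟨C, hC, d, hd⟩ := hlow q hq hqγ
    have hlim :
        Tendsto (fun n : ℕ => q / (C * ((n : ℝ) + 1) ^ d) ^ (n : ℝ)⁻¹) atTop (nhds q) := by
      have := (tendsto_const_nhds (x := q)).div (tendsto_mul_pow_rpow_inv hC d) one_ne_zero
      rwa [div_one] at this
    filter_upwards [hlim.eventually (lt_mem_nhds hbq), hd, eventually_ne_atTop 0]
      with n h₁ h₂ hn
    refine h₁.trans_le ((div_le_iff₀ (by positivity)).2 ?_)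
    calc q = (q ^ n) ^ (n : ℝ)⁻¹ := (Real.pow_rpow_inv_natCast hq.le hn).symm
      _ ≤ (C * ((n : ℝ) + 1) ^ d * a n) ^ (n : ℝ)⁻¹ :=
        Real.rpow_le_rpow (by positivity) h₂ (by positivity)
      _ = _ := by rw [Real.mul_rpow (by positivity) (ha n), mul_comm]
  · intro b hb
    obtain ⟨C, hC, d, hd⟩ := hup
    have hlim :
        Tendsto (fun n : ℕ => (C * ((n : ℝ) + 1) ^ d) ^ (n : ℝ)⁻¹ * γ) atTop (nhds γ) := by
      simpa using (tendsto_mul_pow_rpow_inv hC d).mul_const γ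
    filter_upwards [hlim.eventually (gt_mem_nhds hb), hd, eventually_ne_atTop 0] with n h₁ h₂ hn
    refine lt_of_le_of_lt ?_ h₁
    calc a n ^ (n : ℝ)⁻¹ ≤ (C * ((n : ℝ) + 1) ^ d * γ ^ n) ^ (n : ℝ)⁻¹ :=
          Real.rpow_le_rpow (ha n) h₂ (by positivity)
      _ = _ := by
        rw [Real.mul_rpow (by positivity) (by positivity), Real.pow_rpow_inv_natCast hγ hn]

lemma factorial_le_exp_one_mul {s : ℕ} (hs : 0 < s) :
    (s ! : ℝ) ≤ exp 1 * s * (s / exp 1) ^ s := by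
  obtain ⟨t, rfl⟩ := Nat.exists_eq_succ_of_ne_zero hs.ne'
  have h := Stirling.stirlingSeq'_antitone (Nat.zero_le t)
  simp only [Function.comp_apply, Stirling.stirlingSeq_one] at h
  rw [Stirling.stirlingSeq, div_le_iff₀ (by positivity)] at h
  have hs1 : (1 : ℝ) ≤ (t + 1 : ℕ) := by simp
  have hsqrt :
      exp 1 / √2 * √(2 * ((t + 1 : ℕ) : ℝ)) = exp 1 * √((t + 1 : ℕ) : ℝ) := by
    rw [Real.sqrt_mul zero_le_two]
    field_simp
  refine h.trans ?_
  rw [← mul_assoc, hsqrt]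
  gcongr
  exact Real.sqrt_le_self_iff.2 (.inr hs1)

lemma exists_pow_mul_factorial_le {β : ℝ} (hβ : 0 ≤ β) (hβe : β < exp 1) :
    ∃ s : ℕ, 0 < s ∧ β ^ s * s ! ≤ s ^ s := by
  have hlim : Tendsto (fun s : ℕ => exp 1 * (s * (β / exp 1) ^ s)) atTop (nhds 0) := by
    simpa using (tendsto_self_mul_const_pow_of_lt_one (by positivity)
      ((div_lt_one (exp_pos 1)).2 hβe)).const_mul (exp 1)
  obtain ⟨s, hsmall, hs⟩ :=
    ((hlim.eventually (gt_mem_nhds one_pos)).and (eventually_gt_atTop 0)).exists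
  refine ⟨s, hs, ?_⟩
  calc β ^ s * s ! ≤ β ^ s * (exp 1 * s * (s / exp 1) ^ s) := by
        gcongr; exact factorial_le_exp_one_mul hs
    _ = exp 1 * (s * (β / exp 1) ^ s) * s ^ s := by rw [div_pow, div_pow]; ring
    _ ≤ s ^ s := by nlinarith [pow_nonneg (Nat.cast_nonneg (α := ℝ) s) s]

end Asymptotics

section Bounds

lemma apexCount_div_factorial_le (n k : ℕ) :
    (apexCount n k : ℝ) / n ! ≤ ((n : ℝ) + 1) ^ k * (2 ^ k * exp 1) ^ n := by
  have hcount : (apexCount n k : ℝ) ≤ ((n : ℝ) + 1) ^ k * (2 ^ (k * n) * (n : ℝ) ^ n) := by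
    exact_mod_cast apexCount_le n k
  have hpow : (n : ℝ) ^ n ≤ exp 1 ^ n * n ! := by
    rw [Real.exp_one_pow, ← div_le_iff₀ (by positivity)]
    exact Real.pow_div_factorial_le_exp _ n.cast_nonneg n
  rw [div_le_iff₀ (by positivity)]
  calc (apexCount n k : ℝ) ≤ ((n : ℝ) + 1) ^ k * (2 ^ (k * n) * (exp 1 ^ n * n !)) :=
        hcount.trans (by gcongr)
    _ = _ := by ring

lemma factorial_mul_pow_le_apexCount (k s H r : ℕ) :
    ((H + 1) * s)! * s ^ (H * s) * 2 ^ (k * ((H + 1) * s + (r + 1))) ≤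
      apexCount ((H + 1) * s + (r + 1) + k) k * s ! ^ (H + 1) := by
  set m := (H + 1) * s + (r + 1)
  calc _ ≤ forestCount m * s ! ^ (H + 1) * 2 ^ (k * m) :=
        Nat.mul_le_mul_right _ (factorial_mul_pow_le_forestCount H s r)
    _ = forestCount m * 2 ^ (k * m) * s ! ^ (H + 1) := by ring
    _ ≤ _ := Nat.mul_le_mul_right _ (forestCount_mul_le_apexCount m k)

lemma factorial_le_factorial_mul_pow {N n : ℕ} (h : N ≤ n) : n ! ≤ N ! * n ^ (n - N) := by
  rw [← Nat.factorial_mul_descFactorial (Nat.sub_le n N), Nat.sub_sub_self h]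
  exact Nat.mul_le_mul_left _ (Nat.descFactorial_le_pow n _)

lemma exists_eq_layers {k s n : ℕ} (hs : 0 < s) (hn : k + s < n) :
    ∃ H r, r < s ∧ n = (H + 1) * s + (r + 1) + k := by
  have h₁ := Nat.div_add_mod (n - k - 1) s
  have h₂ : 1 ≤ (n - k - 1) / s := (Nat.one_le_div_iff hs).2 (by omega)
  refine ⟨(n - k - 1) / s - 1, (n - k - 1) % s, Nat.mod_lt _ hs, ?_⟩
  rw [Nat.sub_add_cancel h₂, mul_comm]
  omega

lemma pow_mul_factorial_le_apexCount {k s : ℕ} {β : ℝ} (hs : 0 < s) (hβ : 1 ≤ β)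
    (hβs : β ^ s * s ! ≤ s ^ s) {n : ℕ} (hn : k + s < n) :
    (2 ^ k * β) ^ n * n ! ≤
      2 ^ (k * k) * β ^ (k + s) * s ^ s * ((n : ℝ) + 1) ^ (k + s) * apexCount n k := by
  obtain ⟨H, r, hr, rfl⟩ := exists_eq_layers hs hn
  set N := (H + 1) * s
  set n := N + (r + 1) + k
  have hcount :
      (N ! : ℝ) * s ^ (H * s) * 2 ^ (k * (N + (r + 1))) ≤ apexCount n k * s ! ^ (H + 1) := by
    exact_mod_cast factorial_mul_pow_le_apexCount k s H r
  have hfact : (n ! : ℝ) ≤ N ! * ((n : ℝ) + 1) ^ (k + s) := by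
    have : n ! ≤ N ! * (n + 1) ^ (k + s) := (factorial_le_factorial_mul_pow (by omega)).trans
      (Nat.mul_le_mul_left _ ((Nat.pow_le_pow_left n.le_succ _).trans
        (Nat.pow_le_pow_right n.succ_pos (by omega))))
    exact_mod_cast this
  have hβn : β ^ n ≤ β ^ (k + s) * (β ^ s) ^ (H + 1) := by
    rw [← pow_mul, ← pow_add]
    exact pow_le_pow_right₀ hβ (by rw [mul_comm s]; omega)
  refine le_of_mul_le_mul_right ?_ (by positivity : (0 : ℝ) < s ! ^ (H + 1))
  calc (2 ^ k * β) ^ n * n ! * s ! ^ (H + 1)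
        = 2 ^ (k * k) * 2 ^ (k * (N + (r + 1))) * β ^ n * n ! * s ! ^ (H + 1) := by
        rw [mul_pow, ← pow_mul, ← pow_add, show k * n = k * k + k * (N + (r + 1)) by ring]
    _ ≤ 2 ^ (k * k) * 2 ^ (k * (N + (r + 1))) * (β ^ (k + s) * (β ^ s) ^ (H + 1)) *
          (N ! * ((n : ℝ) + 1) ^ (k + s)) * s ! ^ (H + 1) := by gcongr
    _ = 2 ^ (k * k) * β ^ (k + s) * ((n : ℝ) + 1) ^ (k + s) * 2 ^ (k * (N + (r + 1))) * N ! *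
          (β ^ s * s !) ^ (H + 1) := by ring
    _ ≤ 2 ^ (k * k) * β ^ (k + s) * ((n : ℝ) + 1) ^ (k + s) * 2 ^ (k * (N + (r + 1))) * N ! *
          ((s : ℝ) ^ s) ^ (H + 1) := by gcongr
    _ = 2 ^ (k * k) * β ^ (k + s) * s ^ s * ((n : ℝ) + 1) ^ (k + s) *
          (N ! * s ^ (H * s) * 2 ^ (k * (N + (r + 1)))) := by ring
    _ ≤ _ := by rw [mul_assoc _ (apexCount n k : ℝ)]; gcongr

end Bounds

theorem stmt_2_general (k : ℕ) :
    Filter.Tendsto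
      (fun n : ℕ => ((apexCount n k : ℝ) / (Nat.factorial n : ℝ)) ^ ((n : ℝ)⁻¹))
      Filter.atTop (nhds (2 ^ k * Real.exp 1)) := by
  refine tendsto_rpow_inv_of_bounds (fun n => by positivity) (by positivity)
    ⟨1, one_pos, k, .of_forall fun n => by simpa using apexCount_div_factorial_le n k⟩
    fun q hq hqγ => ?_
  set β := max (q / 2 ^ k) 1
  have hβe : β < exp 1 :=
    max_lt ((div_lt_iff₀' (by positivity)).2 hqγ) (Real.one_lt_exp_iff.2 one_pos)
  obtain ⟨s, hs, hβs⟩ := exists_pow_mul_factorial_le (by positivity) hβe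
  refine ⟨2 ^ (k * k) * β ^ (k + s) * s ^ s, by positivity, k + s, ?_⟩
  filter_upwards [eventually_gt_atTop (k + s)] with n hn
  have hq' : q ≤ 2 ^ k * β := (div_le_iff₀' (by positivity)).1 (le_max_left _ _)
  rw [← mul_div_assoc, le_div_iff₀ (by positivity)]
  exact (mul_le_mul_of_nonneg_right (pow_le_pow_left₀ hq.le hq' n) (by positivity)).trans
    (pow_mul_factorial_le_apexCount hs (le_max_right _ _) hβs hn)

/-- Apex^k F has growth constant 2^k e. -/
theorem stmt_2 (k : ℕ) (hk : 1 ≤ k) :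
    Filter.Tendsto
      (fun n : ℕ => ((apexCount n k : ℝ) / (Nat.factorial n : ℝ)) ^ ((n : ℝ)⁻¹))
      Filter.atTop (nhds (2 ^ k * Real.exp 1)) :=
  stmt_2_general k
end

section
/- Let k be a positive integer. If a finite graph G does not contain k+1 pairwise vertex-disjoint cycles, then G has a k-redundant blocker of size at most f(k) + k. -/
open SimpleGraph Filter Real

/-!
Fix a blocker `B` of size at most f(k). A cycle `C` meeting `B` in a single vertex `v` (its apex)
leaves the path `C - v` in the forest `G - B`, and paths in a forest have a Helly-type property: in
every nonempty family there are a path `P₀` and a vertex `x₀ ∈ P₀` such that each member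
avoiding `x₀` is disjoint from `P₀`. Keeping the cycle of `P₀` and forbidding `x₀` and its apex
from then on, a greedy choice produces vertex-disjoint cycles, so it stops within `k` rounds.
The chosen vertices `X` (outside `B`) and apexes `S` (in `B`) have the property that every
single-apex cycle meets `X` or has its apex in `S`. Hence `B ∪ X` is a blocker from which any
vertex outside `S` can be dropped: a cycle surviving the deletion of `(B ∪ X) \ {v}` would be a
cycle with apex `v` that misses `X`.
-/

namespace SimpleGraph

variable {V : Type*} {G : SimpleGraph V}

lemma exists_mem_support_notMem_of_isAcyclic_induce {s : Set V} (hs : (G.induce s).IsAcyclic)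
    {u : V} {c : G.Walk u u} (hc : c.IsCycle) : ∃ x ∈ c.support, x ∉ s := by
  by_contra! h
  refine hs (c.induce s h) ?_
  rwa [← Walk.isCycle_map_iff_of_injective (f := (Embedding.induce (G := G) s).toHom)
    (Embedding.induce (G := G) s).injective, Walk.map_induce]

lemma IsAcyclic.exists_subsingleton_neighborSet [Finite V] [Nonempty V] (hG : G.IsAcyclic) :
    ∃ y, (G.neighborSet y).Subsingleton := by
  by_contra! hbranch
  have hlong : ∀ n, ∃ (a b : V) (p : G.Walk a b), p.IsPath ∧ p.length = n := by
    intro n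
    induction n with
    | zero => exact ⟨Classical.arbitrary V, _, .nil, .nil, rfl⟩
    | succ n ih =>
      obtain ⟨a, b, p, hp, rfl⟩ := ih
      obtain ⟨z, hz, hzs⟩ := (hbranch a).exists_ne p.snd
      refine ⟨z, b, .cons (G.adj_symm hz) p, ?_, rfl⟩
      exact (Walk.cons_isPath_iff _ _).mpr
        ⟨hp, fun hzp => hzs (hG.eq_snd_of_adj_start hp hz hzp)⟩
  have := Fintype.ofFinite V
  obtain ⟨a, b, p, hp, hlen⟩ := hlong (Fintype.card V)
  exact absurd hp.length_lt (by omega)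

def HasDisjointClosedWalks (G : SimpleGraph V) (m : ℕ) (Q : (Σ v : V, G.Walk v v) → Prop) :
    Prop :=
  ∃ c : Fin m → Σ v : V, G.Walk v v, (∀ i, Q (c i)) ∧
    ∀ i j, i ≠ j → ∀ v, v ∈ (c i).2.support → v ∉ (c j).2.support

variable {m : ℕ} {Q Q' : (Σ v : V, G.Walk v v) → Prop}

lemma HasDisjointClosedWalks.mono (hQ : ∀ p, Q p → Q' p) (h : G.HasDisjointClosedWalks m Q) :
    G.HasDisjointClosedWalks m Q' :=
  let ⟨c, hc, hdisj⟩ := h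
  ⟨c, fun i => hQ _ (hc i), hdisj⟩

lemma hasDisjointClosedWalks_one {p : Σ v : V, G.Walk v v} (hp : Q p) :
    G.HasDisjointClosedWalks 1 Q :=
  ⟨fun _ => p, fun _ => hp, fun i j hij => absurd (Subsingleton.elim i j) hij⟩

lemma HasDisjointClosedWalks.cons {p : Σ v : V, G.Walk v v} (hp : Q p) (hQ' : ∀ q, Q' q → Q q)
    (hdisj : ∀ q, Q' q → ∀ x ∈ p.2.support, x ∉ q.2.support)
    (h : G.HasDisjointClosedWalks m Q') : G.HasDisjointClosedWalks (m + 1) Q := by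
  obtain ⟨c, hc, hcdisj⟩ := h
  refine ⟨Fin.cons p c, Fin.cases hp fun i => hQ' _ (hc i), ?_⟩
  intro i j hij x
  cases i using Fin.cases <;> cases j using Fin.cases
  · exact absurd rfl hij
  · exact hdisj _ (hc _) x
  · exact fun hxc hxp => hdisj _ (hc _) x hxp hxc
  · exact hcdisj _ _ (fun h => hij (congrArg Fin.succ h)) x

section

variable [DecidableEq V]

def IsPathSupport (G : SimpleGraph V) (P : Finset V) : Prop :=
  ∃ (a b : V) (p : G.Walk a b), p.IsPath ∧ p.support.toFinset = P

lemma Walk.not_nil_of_nontrivial_support {a b : V} {p : G.Walk a b}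
    (hp : p.support.toFinset.Nontrivial) : ¬p.Nil := by
  intro hnil
  rw [Walk.nil_iff_support_eq.mp hnil] at hp
  simp at hp

lemma Walk.IsPath.isPathSupport_erase_start {a b : V} {p : G.Walk a b} (hp : p.IsPath)
    (hnil : ¬p.Nil) : G.IsPathSupport (p.support.toFinset.erase a) := by
  cases p with
  | nil => exact absurd Walk.Nil.nil hnil
  | cons h q =>
    rw [Walk.cons_isPath_iff] at hp
    refine ⟨_, _, q, hp.1, ?_⟩
    rw [Walk.support_cons, List.toFinset_cons, Finset.erase_insert (by simpa using hp.2)]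

lemma IsPathSupport.exists_adj {P : Finset V} (hP : G.IsPathSupport P) (hPn : P.Nontrivial)
    {y : V} (hy : y ∈ P) : ∃ z ∈ P, G.Adj y z := by
  obtain ⟨a, b, p, -, rfl⟩ := hP
  simpa using
    adj_of_mem_walk_support p (Walk.not_nil_of_nontrivial_support hPn) (by simpa using hy)

lemma IsPathSupport.erase {U P : Finset V} (hP : G.IsPathSupport P) (hPU : P ⊆ U)
    {y : V} (hyU : y ∈ U) (hleaf : ((G.induce ↑U).neighborSet ⟨y, hyU⟩).Subsingleton)
    (hPy : P ≠ {y}) : G.IsPathSupport (P.erase y) := by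
  by_cases hyP : y ∉ P
  · rwa [Finset.erase_eq_of_notMem hyP]
  obtain ⟨a, b, p, hp, rfl⟩ := hP
  have hnil := Walk.not_nil_of_nontrivial_support
    ((Finset.nontrivial_iff_ne_singleton (not_not.mp hyP)).mpr hPy)
  by_cases hya : y = a
  · subst hya
    exact hp.isPathSupport_erase_start hnil
  by_cases hyb : y = b
  · subst hyb
    simpa [Walk.support_reverse] using
      hp.reverse.isPathSupport_erase_start (by simpa using hnil)
  -- a vertex with at most one neighbour in `U` can only be an end of a path inside `U`
  have hpU : ∀ x ∈ p.support, x ∈ (U : Set V) := fun x hx => hPU (by simpa using hx)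
  have hp' : (p.induce _ hpU).IsPath := by
    rwa [← Walk.isPath_map_iff_of_injective (f := (Embedding.induce (G := G) _).toHom)
      (Embedding.induce (G := G) _).injective, Walk.map_induce]
  refine absurd ?_ (hp'.isTrail.not_mem_support_of_subsingleton_neighborSet (x := ⟨y, hyU⟩)
    (by simpa using hya) (by simpa using hyb) hleaf)
  rw [Walk.support_induce, List.mem_attachWith]; simpa using hyP

lemma Walk.IsCycle.isPathSupport_erase {v : V} {c : G.Walk v v} (hc : c.IsCycle) :
    G.IsPathSupport (c.support.toFinset.erase v) := by
  cases c with
  | nil => exact absurd hc Walk.not_isCycle_nil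
  | cons h q =>
    rw [Walk.cons_isCycle_iff] at hc
    have := hc.1.reverse.isPathSupport_erase_start (Walk.not_nil_of_ne h.ne)
    simpa [Walk.support_reverse] using this

/-- Induction on `U`, pruning a leaf of the forest `G[U]`. -/
theorem exists_mem_forall_disjoint_of_isAcyclic (U : Finset V) (hU : (G.induce ↑U).IsAcyclic)
    (Ps : Set (Finset V)) (hne : Ps.Nonempty) (hPs : ∀ P ∈ Ps, P ⊆ U ∧ G.IsPathSupport P) :
    ∃ P₀ ∈ Ps, ∃ x₀ ∈ P₀, ∀ Q ∈ Ps, x₀ ∉ Q → Disjoint Q P₀ := by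
  induction U using Finset.strongInduction generalizing Ps with
  | H U ih =>
  obtain ⟨P, hP⟩ := hne
  have : Nonempty (U : Set V) := by
    obtain ⟨a, b, p, -, hp⟩ := (hPs P hP).2
    exact ⟨a, (hPs P hP).1 (hp ▸ by simp)⟩
  obtain ⟨⟨y, hyU⟩, hleaf⟩ := hU.exists_subsingleton_neighborSet
  by_cases hsingle : {y} ∈ Ps
  · exact ⟨{y}, hsingle, y, Finset.mem_singleton_self y, fun Q _ hyQ =>
      Finset.disjoint_singleton_right.mpr hyQ⟩
  have hPs' : ∀ P' ∈ (·.erase y) '' Ps, P' ⊆ U.erase y ∧ G.IsPathSupport P' := by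
    rintro _ ⟨P, hP, rfl⟩
    exact ⟨Finset.erase_subset_erase y (hPs P hP).1,
      (hPs P hP).2.erase (hPs P hP).1 hyU hleaf (fun h => hsingle (h ▸ hP))⟩
  obtain ⟨_, ⟨P₀, hP₀, rfl⟩, x₀, hx₀, hdisj⟩ := ih (U.erase y) (Finset.erase_ssubset hyU)
    (hU.embedding (G.induceHomOfLE (by simp))) ((·.erase y) '' Ps) ⟨_, P, hP, rfl⟩ hPs'
  refine ⟨P₀, hP₀, x₀, Finset.mem_of_mem_erase hx₀, fun Q hQ hx₀Q => ?_⟩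
  have hdisj' := hdisj _ ⟨Q, hQ, rfl⟩ (fun h => hx₀Q (Finset.mem_of_mem_erase h))
  refine Finset.disjoint_left.mpr fun w hwQ hwP => ?_
  by_cases hwy : w ≠ y
  · exact Finset.disjoint_left.mp hdisj' (Finset.mem_erase.mpr ⟨hwy, hwQ⟩)
      (Finset.mem_erase.mpr ⟨hwy, hwP⟩)
  obtain rfl := not_not.mp hwy
  have hnontrivial : ∀ R ∈ Ps, w ∈ R → R.Nontrivial := fun R hR hwR =>
    (Finset.nontrivial_iff_ne_singleton hwR).mpr fun h => hsingle (h ▸ hR)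
  -- the leaf `w` has a neighbour on both paths, and it has only one neighbour in `U`
  obtain ⟨z, hzQ, hwz⟩ := (hPs Q hQ).2.exists_adj (hnontrivial Q hQ hwQ) hwQ
  obtain ⟨z', hz'P, hwz'⟩ := (hPs P₀ hP₀).2.exists_adj (hnontrivial P₀ hP₀ hwP) hwP
  obtain rfl : z = z' := congrArg Subtype.val
    (hleaf (x := ⟨z, (hPs Q hQ).1 hzQ⟩) hwz (y := ⟨z', (hPs P₀ hP₀).1 hz'P⟩) hwz')
  exact Finset.disjoint_left.mp hdisj' (Finset.mem_erase.mpr ⟨hwz.ne', hzQ⟩)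
    (Finset.mem_erase.mpr ⟨hwz.ne', hz'P⟩)

def IsApexCycle (B : Finset V) (p : Σ v : V, G.Walk v v) : Prop :=
  p.2.IsCycle ∧ p.2.support.toFinset ∩ B = {p.1}

namespace IsApexCycle

variable {B : Finset V} {p q : Σ v : V, G.Walk v v}

lemma apex_mem (hp : IsApexCycle B p) : p.1 ∈ B :=
  (Finset.mem_inter.mp (hp.2 ▸ Finset.mem_singleton_self p.1)).2

lemma eq_apex_of_mem (hp : IsApexCycle B p) {x : V} (hx : x ∈ p.2.support) (hxB : x ∈ B) :
    x = p.1 :=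
  Finset.mem_singleton.mp (hp.2 ▸ Finset.mem_inter.mpr ⟨List.mem_toFinset.mpr hx, hxB⟩)

lemma notMem_of_mem_erase (hp : IsApexCycle B p) {x : V}
    (hx : x ∈ p.2.support.toFinset.erase p.1) : x ∉ B := fun hxB =>
  (Finset.mem_erase.mp hx).1
    (hp.eq_apex_of_mem (List.mem_toFinset.mp (Finset.mem_of_mem_erase hx)) hxB)

lemma disjoint_support (hp : IsApexCycle B p) (hq : IsApexCycle B q) (hpq : p.1 ≠ q.1)
    (h : Disjoint (p.2.support.toFinset.erase p.1) (q.2.support.toFinset.erase q.1)) :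
    ∀ x ∈ p.2.support, x ∉ q.2.support := by
  intro x hxp hxq
  by_cases hxB : x ∈ B
  · exact hpq ((hp.eq_apex_of_mem hxp hxB).symm.trans (hq.eq_apex_of_mem hxq hxB))
  · exact Finset.disjoint_left.mp h
      (Finset.mem_erase.mpr ⟨by rintro rfl; exact hxB hp.apex_mem, List.mem_toFinset.mpr hxp⟩)
      (Finset.mem_erase.mpr ⟨by rintro rfl; exact hxB hq.apex_mem, List.mem_toFinset.mpr hxq⟩)

end IsApexCycle

lemma exists_mem_support_forall_disjoint_of_isApexCycle [Fintype V] {B : Finset V}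
    (hB : IsBlocker G ↑B) (hQ : ∀ p, Q p → IsApexCycle B p) (hex : ∃ p, Q p) :
    ∃ p₀, Q p₀ ∧ ∃ x₀ ∈ p₀.2.support, x₀ ∉ B ∧ ∀ q, Q q → x₀ ∉ q.2.support → q.1 ≠ p₀.1 →
      ∀ x ∈ p₀.2.support, x ∉ q.2.support := by
  obtain ⟨_, ⟨p₀, hp₀, rfl⟩, x₀, hx₀, h⟩ := exists_mem_forall_disjoint_of_isAcyclic Bᶜ
    (by rwa [Finset.coe_compl]) {P | ∃ p, Q p ∧ p.2.support.toFinset.erase p.1 = P}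
    (let ⟨p, hp⟩ := hex; ⟨_, p, hp, rfl⟩)
    (by
      rintro _ ⟨p, hp, rfl⟩
      exact ⟨fun _ hx => Finset.mem_compl.mpr ((hQ p hp).notMem_of_mem_erase hx),
        (hQ p hp).1.isPathSupport_erase⟩)
  refine ⟨p₀, hp₀, x₀, List.mem_toFinset.mp (Finset.mem_of_mem_erase hx₀),
    (hQ p₀ hp₀).notMem_of_mem_erase hx₀, fun q hq hx₀q hqp₀ => ?_⟩
  exact (hQ p₀ hp₀).disjoint_support (hQ q hq) hqp₀.symm (h _ ⟨q, hq, rfl⟩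
    fun h => hx₀q (List.mem_toFinset.mp (Finset.mem_of_mem_erase h))).symm

theorem exists_cover_of_not_hasDisjointClosedWalks [Fintype V] {B : Finset V}
    (hB : IsBlocker G ↑B) (j : ℕ) (Q : (Σ v : V, G.Walk v v) → Prop)
    (hQ : ∀ p, Q p → IsApexCycle B p) (hpack : ¬G.HasDisjointClosedWalks (j + 1) Q) :
    ∃ X S : Finset V, X.card ≤ j ∧ S.card ≤ j ∧ Disjoint X B ∧ S ⊆ B ∧
      ∀ p, Q p → (∃ x ∈ X, x ∈ p.2.support) ∨ p.1 ∈ S := by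
  induction j generalizing Q with
  | zero =>
    exact ⟨∅, ∅, by simp, by simp, by simp, by simp,
      fun p hp => absurd (hasDisjointClosedWalks_one hp) hpack⟩
  | succ j ih =>
    by_cases hex : ∃ p, Q p
    swap
    · exact ⟨∅, ∅, by simp, by simp, by simp, by simp, fun p hp => absurd ⟨p, hp⟩ hex⟩
    obtain ⟨p₀, hp₀, x₀, -, hx₀B, hdisj⟩ :=
      exists_mem_support_forall_disjoint_of_isApexCycle hB hQ hex
    -- greedily keep `p₀`, and forbid `x₀` and the apex of `p₀` for the remaining cycles
    obtain ⟨X, S, hXc, hSc, hXB, hSB, hcover⟩ :=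
      ih (fun q => Q q ∧ x₀ ∉ q.2.support ∧ q.1 ≠ p₀.1) (fun q hq => hQ q hq.1)
        fun h => hpack <| h.cons hp₀ (fun q hq => hq.1) fun q hq => hdisj q hq.1 hq.2.1 hq.2.2
    refine ⟨insert x₀ X, insert p₀.1 S, (Finset.card_insert_le _ _).trans (by omega),
      (Finset.card_insert_le _ _).trans (by omega),
      Finset.disjoint_insert_left.mpr ⟨hx₀B, hXB⟩,
      Finset.insert_subset (hQ p₀ hp₀).apex_mem hSB, fun q hq => ?_⟩
    by_cases hx₀q : x₀ ∈ q.2.support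
    · exact .inl ⟨x₀, Finset.mem_insert_self _ _, hx₀q⟩
    by_cases hq₀ : q.1 = p₀.1
    · exact .inr (hq₀ ▸ Finset.mem_insert_self _ _)
    rcases hcover q ⟨hq, hx₀q, hq₀⟩ with ⟨x, hx, hxq⟩ | hS
    · exact .inl ⟨x, Finset.mem_insert_of_mem hx, hxq⟩
    · exact .inr (Finset.mem_insert_of_mem hS)

end

end SimpleGraph

section

variable {V : Type*} {G : SimpleGraph V}

lemma isBlocker_iff {S : Set V} :
    IsBlocker G S ↔ ∀ (u : V) (c : G.Walk u u), c.IsCycle → ∃ x ∈ c.support, x ∈ S := by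
  refine ⟨fun h u c hc => by simpa using exists_mem_support_notMem_of_isAcyclic_induce h hc, ?_⟩
  rintro h ⟨v, hv⟩ c hc
  obtain ⟨x, hx, hxS⟩ := h _ _
    (hc.map (f := (Embedding.induce (G := G) Sᶜ).toHom) (Embedding.induce (G := G) Sᶜ).injective)
  obtain ⟨y, -, rfl⟩ := List.mem_map.mp ((Walk.support_map _ _) ▸ hx)
  exact y.2 hxS

lemma IsBlocker.mono {S T : Set V} (hST : S ⊆ T) (h : IsBlocker G S) : IsBlocker G T :=
  IsAcyclic.embedding (G.induceHomOfLE (Set.compl_subset_compl.mpr hST)) h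

lemma IsBlocker.union_sdiff_singleton [DecidableEq V] {B X S : Finset V} (hB : IsBlocker G ↑B)
    (hXB : Disjoint X B)
    (hcover : ∀ p : Σ v : V, G.Walk v v, IsApexCycle B p →
      (∃ x ∈ X, x ∈ p.2.support) ∨ p.1 ∈ S)
    {v : V} (hvS : v ∉ S) : IsBlocker G ↑((B ∪ X) \ {v}) := by
  refine isBlocker_iff.mpr fun u c hc => ?_
  by_contra! h
  have hrest : ∀ x ∈ c.support, x ∈ B ∪ X → x = v := fun x hx hxBX =>
    by_contra fun hxv => h x hx (Finset.mem_sdiff.mpr ⟨hxBX, Finset.notMem_singleton.mpr hxv⟩)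
  obtain ⟨x, hx, hxB : x ∈ B⟩ := isBlocker_iff.mp hB u c hc
  obtain rfl := hrest x hx (Finset.mem_union_left _ hxB)
  have hapex : IsApexCycle B ⟨x, c.rotate x hx⟩ := by
    refine ⟨hc.rotate hx, Finset.ext fun y => ?_⟩
    simp only [Finset.mem_inter, List.mem_toFinset, Walk.mem_support_rotate_iff,
      Finset.mem_singleton]
    exact ⟨fun hy => hrest y hy.1 (Finset.mem_union_left _ hy.2), by rintro rfl; exact ⟨hx, hxB⟩⟩
  rcases hcover _ hapex with ⟨y, hyX, hy⟩ | hxS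
  · obtain rfl := hrest y (by simpa using hy) (Finset.mem_union_right _ hyX)
    exact Finset.disjoint_left.mp hXB hyX hxB
  · exact hvS hxS

end

theorem stmt_5_general (k : ℕ) (f : ℕ)
    (hf : IsLeast {m : ℕ | ∀ (V : Type) [Fintype V] (G : SimpleGraph V),
        ¬ HasDisjointCycles G (k + 1) →
          ∃ B : Finset V, B.card ≤ m ∧ IsBlocker G ↑B} f)
    (V : Type) [Fintype V] [DecidableEq V] (G : SimpleGraph V)
    (hG : ¬ HasDisjointCycles G (k + 1)) :
    ∃ B : Finset V, B.card ≤ f + k ∧ IsBlocker G ↑B ∧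
      ∃ S : Finset V, S ⊆ B ∧ S.card ≤ k ∧
        ∀ v ∈ B, v ∉ S → IsBlocker G ↑(B \ {v}) := by
  obtain ⟨B, hBcard, hB⟩ := hf.1 V G hG
  obtain ⟨X, S, hXcard, hScard, hXB, hSB, hcover⟩ :=
    exists_cover_of_not_hasDisjointClosedWalks hB k (IsApexCycle B) (fun _ hp => hp)
      fun h => hG (h.mono (Q' := fun p => p.2.IsCycle) fun _ hp => hp.1)
  exact ⟨B ∪ X, (Finset.card_union_le _ _).trans (add_le_add hBcard hXcard),
    hB.mono (by simp), S, hSB.trans Finset.subset_union_left, hScard,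
    fun _ _ hvS => hB.union_sdiff_singleton hXB hcover hvS⟩

/-- if f(k) is the least value in the Erdős–Pósa theorem, then every finite
graph with no k+1 disjoint cycles has a k-redundant blocker of size at most f(k)+k. -/
theorem stmt_5 (k : ℕ) (hk : 1 ≤ k) (f : ℕ)
    (hf : IsLeast {m : ℕ | ∀ (V : Type) [Fintype V] (G : SimpleGraph V),
        ¬ HasDisjointCycles G (k + 1) →
          ∃ B : Finset V, B.card ≤ m ∧ IsBlocker G ↑B} f)
    (V : Type) [Fintype V] [DecidableEq V] (G : SimpleGraph V)
    (hG : ¬ HasDisjointCycles G (k + 1)) :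
    ∃ B : Finset V, B.card ≤ f + k ∧ IsBlocker G ↑B ∧
      ∃ S : Finset V, S ⊆ B ∧ S.card ≤ k ∧
        ∀ v ∈ B, v ∉ S → IsBlocker G ↑(B \ {v}) :=
  stmt_5_general k f hf V G hG
end

section
/- Let k ≥ 0 be an integer, let G be a finite graph with no k+1 pairwise vertex-disjoint cycles, and let Q be a blocker in G. Then there exist sets S ⊆ Q with |S| ≤ k and A ⊆ V(G) \ Q with |A| ≤ k such that there is no cycle C in G − S with |V(C) ∩ (Q ∪ A)| ≤ 1; equivalently, every cycle of G − S has at least two vertices in Q ∪ A. -/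
open SimpleGraph Filter Real

/-!
Induce on `k`, remembering a set `R` of vertices that the cycles still to be handled must avoid.
Call a cycle singular if `Q` meets it in a single vertex; its other vertices then span a subtree of
the forest `G - Q`. If there is no singular cycle, `S = A = ∅` works, since every cycle meets the
blocker `Q`. Otherwise root each component of `G - Q` and choose a singular cycle `C` whose subtree
has its topmost vertex `v` as deep as possible; put the `Q`-vertex of `C` into `S`, put `v` into
`A`, and apply induction to the cycles avoiding `C`. A remaining singular cycle avoiding `S` that
meets `C` meets it in the forest, and then it contains `v`: in a rooted forest, two subtrees sharing
a vertex are nested along the root path of that vertex, so the subtree with the shallower top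
contains the top of the other.
-/

namespace SimpleGraph

section Forest

variable {W : Type*} {F : SimpleGraph W}

noncomputable def rootOf (F : SimpleGraph W) (z : W) : W := (F.connectedComponentMk z).out

noncomputable def depth (F : SimpleGraph W) (z : W) : ℕ := F.dist (F.rootOf z) z

def IsTopmost (F : SimpleGraph W) (T : Set W) (v : W) : Prop :=
  v ∈ T ∧ ∀ z ∈ T, F.depth v ≤ F.depth z

lemma reachable_rootOf (z : W) : F.Reachable (F.rootOf z) z :=
  ConnectedComponent.exact (Quot.out_eq _)

lemma rootOf_eq_of_reachable {x y : W} (h : F.Reachable x y) : F.rootOf x = F.rootOf y := by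
  rw [rootOf, rootOf, ConnectedComponent.sound h]

lemma depth_lt_of_mem_support [DecidableEq W] {u v : W} {p : F.Walk (F.rootOf v) v}
    (hp : p.length = F.depth v) (hu : u ∈ p.support) (huv : u ≠ v) : F.depth u < F.depth v := by
  have hroot : F.rootOf v = F.rootOf u :=
    rootOf_eq_of_reachable ((reachable_rootOf v).symm.trans ⟨p.takeUntil u hu⟩)
  calc F.depth u = F.dist (F.rootOf v) u := by rw [depth, hroot]
    _ ≤ (p.takeUntil u hu).length := dist_le _
    _ < p.length := Walk.length_takeUntil_lt_length hu huv
    _ = F.depth v := hp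

lemma exists_isPath_of_preconnected_induce [DecidableEq W] {T : Set W}
    (hT : (F.induce T).Preconnected) {a b : W} (ha : a ∈ T) (hb : b ∈ T) :
    ∃ p : F.Walk a b, p.IsPath ∧ ∀ z ∈ p.support, z ∈ T := by
  obtain ⟨w⟩ := hT ⟨a, ha⟩ ⟨b, hb⟩
  let p := w.map (Embedding.induce T).toHom
  refine ⟨p.bypass, p.bypass_isPath, fun z hz => ?_⟩
  have hz' := p.support_bypass_subset_support hz
  rw [Walk.support_map] at hz'
  obtain ⟨y, -, rfl⟩ := List.mem_map.mp hz'
  exact y.2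

/-- The root path of `v` followed by a path from `v` to `x` inside `T` is again a path: its first
part stays strictly above `v`, its second part never rises above `v`. -/
lemma IsTopmost.exists_isPath_rootOf [DecidableEq W] {T : Set W}
    (hT : (F.induce T).Preconnected) {v x : W} (hv : F.IsTopmost T v) (hx : x ∈ T) :
    ∃ q : F.Walk (F.rootOf x) x, q.IsPath ∧ v ∈ q.support ∧
      ∀ u ∈ q.support, F.depth v ≤ F.depth u → u ∈ T := by
  obtain ⟨P, hP, hPlen⟩ := (reachable_rootOf (F := F) v).exists_path_of_dist
  obtain ⟨p, hp, hpT⟩ := exists_isPath_of_preconnected_induce hT hv.1 hx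
  have below : ∀ u ∈ P.support, F.depth v ≤ F.depth u → u = v := fun u hu hvu => by
    by_contra huv
    exact (depth_lt_of_mem_support (p := P) hPlen hu huv).not_ge hvu
  have hroot : F.rootOf v = F.rootOf x := rootOf_eq_of_reachable p.reachable
  refine ⟨(P.append p).copy hroot rfl, ?_, ?_, ?_⟩
  · rw [Walk.isPath_copy]
    apply Walk.IsPath.mk'
    rw [Walk.support_append]
    have hpnd := hp.support_nodup
    rw [← Walk.cons_tail_support, List.nodup_cons] at hpnd
    refine hP.support_nodup.append hpnd.2 fun u huP hup => hpnd.1 ?_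
    obtain rfl := below u huP (hv.2 u (hpT u (List.mem_of_mem_tail hup)))
    exact hup
  · simp
  · intro u hu hvu
    rw [Walk.support_copy, Walk.mem_support_append_iff] at hu
    rcases hu with hu | hu
    · exact below u hu hvu ▸ hv.1
    · exact hpT u hu

theorem IsAcyclic.mem_of_isTopmost [DecidableEq W] (hF : F.IsAcyclic) {T₁ T₂ : Set W}
    (h₁ : (F.induce T₁).Preconnected) (h₂ : (F.induce T₂).Preconnected) {x v₁ v₂ : W}
    (hx₁ : x ∈ T₁) (hx₂ : x ∈ T₂) (hv₁ : F.IsTopmost T₁ v₁) (hv₂ : F.IsTopmost T₂ v₂)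
    (hle : F.depth v₂ ≤ F.depth v₁) : v₁ ∈ T₂ := by
  obtain ⟨q₁, hq₁, hv₁q, -⟩ := hv₁.exists_isPath_rootOf h₁ hx₁
  obtain ⟨q₂, hq₂, -, hT₂⟩ := hv₂.exists_isPath_rootOf h₂ hx₂
  have hq : q₁ = q₂ := congrArg Subtype.val ((hF.subsingleton_path _ _).elim ⟨q₁, hq₁⟩ ⟨q₂, hq₂⟩)
  exact hT₂ v₁ (hq ▸ hv₁q) hle

end Forest

variable {V : Type*} {G : SimpleGraph V} {Q R : Set V}

def Walk.supportIn (s : Set V) {u v : V} (p : G.Walk u v) : Set s := {x | ↑x ∈ p.support}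

lemma Walk.IsCycle.mem_support_tail_dropLast_iff {q : V} {c : G.Walk q q} (hc : c.IsCycle)
    (x : V) : x ∈ c.tail.dropLast.support ↔ x ∈ c.support ∧ x ≠ q := by
  have htail : ¬ c.tail.Nil := by
    rw [Walk.not_nil_iff_lt_length, Walk.length_tail]
    have := hc.three_le_length
    omega
  have hnd := hc.isPath_tail.support_nodup
  rw [← Walk.support_dropLast_concat htail, List.nodup_append] at hnd
  rw [← Walk.cons_support_tail hc.not_nil, ← Walk.support_dropLast_concat htail]
  constructor
  · intro hx
    exact ⟨by simp [hx], fun hxq => hnd.2.2 x hx q (by simp) hxq⟩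
  · rintro ⟨hx, hxq⟩
    simpa [hxq] using hx

lemma Walk.IsCycle.preconnected_supportIn {s : Set V} {q : V} {c : G.Walk q q}
    (hc : c.IsCycle) (hq : q ∉ s) (hs : ∀ u ∈ c.support, u ≠ q → u ∈ s) :
    ((G.induce s).induce (c.supportIn s)).Preconnected := by
  have hD : ∀ x ∈ c.tail.dropLast.support, x ∈ s := fun x hx =>
    hs x ((hc.mem_support_tail_dropLast_iff x).1 hx).1 ((hc.mem_support_tail_dropLast_iff x).1 hx).2
  have hT : c.supportIn s = {x | x ∈ (c.tail.dropLast.induce s hD).support} := by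
    ext x
    simp only [Walk.supportIn, Walk.support_induce, List.mem_attachWith,
      hc.mem_support_tail_dropLast_iff]
    exact ⟨fun hx => ⟨hx, fun hxq => hq (hxq ▸ x.2)⟩, And.left⟩
  rw [hT]
  exact (c.tail.dropLast.induce s hD).connected_induce_support.preconnected

lemma Walk.IsCycle.exists_mem_of_isBlocker (hQ : IsBlocker G Q) {v : V}
    {c : G.Walk v v} (hc : c.IsCycle) : ∃ q ∈ c.support, q ∈ Q := by
  by_contra! h
  refine hQ (c.induce Qᶜ h) ?_
  rwa [← Walk.isCycle_map_iff_of_injective (f := (Embedding.induce Qᶜ).toHom)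
    Subtype.val_injective, Walk.map_induce]

def Walk.IsSingular (Q : Set V) {q : V} (c : G.Walk q q) : Prop :=
  c.IsCycle ∧ q ∈ Q ∧ ∀ u ∈ c.support, u ∈ Q → u = q

lemma Walk.IsCycle.isSingular_rotate [DecidableEq V] {v q : V} {c : G.Walk v v} (hc : c.IsCycle)
    (hq : q ∈ c.support) (hqQ : q ∈ Q) (huniq : ∀ u ∈ c.support, u ∈ Q → u = q) :
    (c.rotate q hq).IsSingular Q :=
  ⟨hc.rotate hq, hqQ, fun u hu => huniq u ((c.mem_support_rotate_iff q hq).1 hu)⟩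

lemma Walk.IsCycle.exists_isSingular_of_ncard_lt_two {A : Set V} (hQ : IsBlocker G Q) {v : V}
    {c : G.Walk v v} (hc : c.IsCycle) (h : ({u | u ∈ c.support} ∩ (Q ∪ A)).ncard < 2) :
    ∃ q ∈ c.support, q ∈ Q ∧ ∀ u ∈ c.support, u ∈ Q ∪ A → u = q := by
  obtain ⟨q, hq, hqQ⟩ := hc.exists_mem_of_isBlocker hQ
  refine ⟨q, hq, hqQ, fun u hu huQA => ?_⟩
  by_contra huq
  have hfin : ({u | u ∈ c.support} ∩ (Q ∪ A)).Finite := c.support.finite_toSet.inter_of_left _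
  have := (Set.one_lt_ncard_iff hfin).2 ⟨u, q, ⟨hu, huQA⟩, ⟨hq, Or.inl hqQ⟩, huq⟩
  omega

lemma Walk.IsSingular.preconnected {q : V} {c : G.Walk q q} (hc : c.IsSingular Q) :
    ((G.induce Qᶜ).induce (c.supportIn Qᶜ)).Preconnected :=
  hc.1.preconnected_supportIn (not_not_intro hc.2.1) fun u hu huq huQ => huq (hc.2.2 u hu huQ)

lemma Walk.IsSingular.exists_isTopmost [Finite V] {q : V} {c : G.Walk q q}
    (hc : c.IsSingular Q) : ∃ v, (G.induce Qᶜ).IsTopmost (c.supportIn Qᶜ) v := by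
  have hsnd : c.snd ∉ Q := fun h =>
    (c.adj_snd hc.1.not_nil).ne (hc.2.2 _ (c.getVert_mem_support 1) h).symm
  obtain ⟨v, hv, hmin⟩ := Set.exists_min_image (c.supportIn Qᶜ) (G.induce Qᶜ).depth
    (Set.toFinite _) ⟨⟨c.snd, hsnd⟩, c.getVert_mem_support 1⟩
  exact ⟨v, hv, hmin⟩

lemma exists_isSingular_isTopmost_max [Finite V]
    (h : ∃ (q : V) (c : G.Walk q q), c.IsSingular Q ∧ ∀ u ∈ c.support, u ∉ R) :
    ∃ (q : V) (c : G.Walk q q) (v : ↥Qᶜ), (c.IsSingular Q ∧ ∀ u ∈ c.support, u ∉ R) ∧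
      (G.induce Qᶜ).IsTopmost (c.supportIn Qᶜ) v ∧
      ∀ (q' : V) (c' : G.Walk q' q') (v' : ↥Qᶜ), (c'.IsSingular Q ∧ ∀ u ∈ c'.support, u ∉ R) →
        (G.induce Qᶜ).IsTopmost (c'.supportIn Qᶜ) v' →
        (G.induce Qᶜ).depth v' ≤ (G.induce Qᶜ).depth v := by
  set tops := {v : ↥Qᶜ | ∃ (q : V) (c : G.Walk q q),
    (c.IsSingular Q ∧ ∀ u ∈ c.support, u ∉ R) ∧ (G.induce Qᶜ).IsTopmost (c.supportIn Qᶜ) v}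
  have hne : tops.Nonempty := by
    obtain ⟨q, c, hc⟩ := h
    obtain ⟨v, hv⟩ := hc.1.exists_isTopmost
    exact ⟨v, q, c, hc, hv⟩
  obtain ⟨v, ⟨q, c, hc, hv⟩, hmax⟩ :=
    Set.exists_max_image tops (G.induce Qᶜ).depth (Set.toFinite _) hne
  exact ⟨q, c, v, hc, hv, fun q' c' v' hc' hv' => hmax v' ⟨q', c', hc', hv'⟩⟩

lemma Walk.IsSingular.eq_or_mem_of_mem_support [DecidableEq V] (hQ : IsBlocker G Q)
    {q q' : V} {c : G.Walk q q} {c' : G.Walk q' q'} (hc : c.IsSingular Q)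
    (hc' : c'.IsSingular Q) {v v' : ↥Qᶜ} (hv : (G.induce Qᶜ).IsTopmost (c.supportIn Qᶜ) v)
    (hv' : (G.induce Qᶜ).IsTopmost (c'.supportIn Qᶜ) v')
    (hle : (G.induce Qᶜ).depth v' ≤ (G.induce Qᶜ).depth v) {x : V} (hx : x ∈ c.support)
    (hx' : x ∈ c'.support) : q = q' ∨ ↑v ∈ c'.support := by
  by_cases hxQ : x ∈ Q
  · exact Or.inl ((hc.2.2 x hx hxQ).symm.trans (hc'.2.2 x hx' hxQ))
  · exact Or.inr (IsAcyclic.mem_of_isTopmost hQ hc.preconnected hc'.preconnected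
      (x := ⟨x, hxQ⟩) hx hx' hv hv' hle)

def HasDisjointCyclesAvoiding (G : SimpleGraph V) (R : Set V) (m : ℕ) : Prop :=
  ∃ c : Fin m → (Σ v : V, G.Walk v v),
    (∀ i, (c i).2.IsCycle) ∧ (∀ i, ∀ v ∈ (c i).2.support, v ∉ R) ∧
    ∀ i j, i ≠ j → ∀ v, v ∈ (c i).2.support → v ∉ (c j).2.support

lemma hasDisjointCyclesAvoiding_zero : HasDisjointCyclesAvoiding G R 0 :=
  ⟨Fin.elim0, fun i => i.elim0, fun i => i.elim0, fun i => i.elim0⟩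

lemma hasDisjointCyclesAvoiding_empty_iff {m : ℕ} :
    HasDisjointCyclesAvoiding G ∅ m ↔ HasDisjointCycles G m :=
  ⟨fun ⟨c, hc, _, hdisj⟩ => ⟨c, hc, hdisj⟩, fun ⟨c, hc, hdisj⟩ => ⟨c, hc, fun _ _ _ => id, hdisj⟩⟩

lemma HasDisjointCyclesAvoiding.cons {m : ℕ} {v : V} {c : G.Walk v v} (hc : c.IsCycle)
    (hcR : ∀ u ∈ c.support, u ∉ R) (h : HasDisjointCyclesAvoiding G (R ∪ {u | u ∈ c.support}) m) :
    HasDisjointCyclesAvoiding G R (m + 1) := by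
  obtain ⟨cs, hcs, hR, hdisj⟩ := h
  refine ⟨Fin.cons ⟨v, c⟩ cs, Fin.cases hc hcs,
    Fin.cases hcR fun i u hu huR => hR i u hu (Or.inl huR), fun i j hij => ?_⟩
  cases i using Fin.cases <;> cases j using Fin.cases
  · exact absurd rfl hij
  · exact fun u hu hu' => hR _ u hu' (Or.inr hu)
  · exact fun u hu hu' => hR _ u hu (Or.inr hu')
  · exact hdisj _ _ (fun h => hij (congrArg Fin.succ h))

def CyclesMeetTwice (G : SimpleGraph V) (X Y : Set V) : Prop :=
  ∀ (v : V) (c : G.Walk v v), c.IsCycle → (∀ u ∈ c.support, u ∉ X) →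
    2 ≤ ({u | u ∈ c.support} ∩ Y).ncard

lemma cyclesMeetTwice_of_not_exists_isSingular [DecidableEq V] (hQ : IsBlocker G Q)
    (h : ¬ ∃ (q : V) (c : G.Walk q q), c.IsSingular Q ∧ ∀ u ∈ c.support, u ∉ R) :
    G.CyclesMeetTwice R Q := by
  intro v c hc hcR
  by_contra! hlt
  obtain ⟨q, hq, hqQ, huniq⟩ :=
    hc.exists_isSingular_of_ncard_lt_two (A := ∅) hQ (by simpa using hlt)
  exact h ⟨q, c.rotate q hq, hc.isSingular_rotate hq hqQ (by simpa using huniq),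
    fun u hu => hcR u ((c.mem_support_rotate_iff q hq).1 hu)⟩

lemma exists_cyclesMeetTwice_succ [Finite V] [DecidableEq V] (hQ : IsBlocker G Q) {k : ℕ}
    (hR : ¬ HasDisjointCyclesAvoiding G R (k + 2))
    (ih : ∀ R', ¬ HasDisjointCyclesAvoiding G R' (k + 1) →
      ∃ S ⊆ Q, S.ncard ≤ k ∧ ∃ A ⊆ Qᶜ, A.ncard ≤ k ∧ G.CyclesMeetTwice (R' ∪ S) (Q ∪ A))
    (hsing : ∃ (q : V) (c : G.Walk q q), c.IsSingular Q ∧ ∀ u ∈ c.support, u ∉ R) :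
    ∃ S ⊆ Q, S.ncard ≤ k + 1 ∧ ∃ A ⊆ Qᶜ, A.ncard ≤ k + 1 ∧
      G.CyclesMeetTwice (R ∪ S) (Q ∪ A) := by
  obtain ⟨q, c, v, ⟨hc, hcR⟩, hv, hmax⟩ := exists_isSingular_isTopmost_max hsing
  obtain ⟨S, hSQ, hSk, A, hAQ, hAk, hSA⟩ :=
    ih (R ∪ {u | u ∈ c.support}) fun h => hR (h.cons hc.1 hcR)
  refine ⟨insert q S, Set.insert_subset hc.2.1 hSQ, (Set.ncard_insert_le _ _).trans (by omega),
    insert ↑v A, Set.insert_subset v.2 hAQ, (Set.ncard_insert_le _ _).trans (by omega),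
    fun w d hd hdRS => ?_⟩
  by_contra! hlt
  obtain ⟨p, hp, hpQ, huniq⟩ := hd.exists_isSingular_of_ncard_lt_two hQ hlt
  have hvd : ↑v ∉ d.support := fun h => v.2 (huniq v h (Or.inr (Set.mem_insert _ _)) ▸ hpQ)
  by_cases hmeet : ∃ x ∈ c.support, x ∈ d.support
  · obtain ⟨x, hxc, hxd⟩ := hmeet
    have hd' : (d.rotate p hp).IsSingular Q :=
      hd.isSingular_rotate hp hpQ fun u hu huQ => huniq u hu (Or.inl huQ)
    have hdR : ∀ u ∈ (d.rotate p hp).support, u ∉ R := fun u hu huR =>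
      hdRS u ((d.mem_support_rotate_iff p hp).1 hu) (Or.inl huR)
    obtain ⟨v', hv'⟩ := hd'.exists_isTopmost
    rcases hc.eq_or_mem_of_mem_support hQ hd' hv hv' (hmax _ _ v' ⟨hd', hdR⟩ hv') hxc
      ((d.mem_support_rotate_iff p hp).2 hxd) with rfl | hvmem
    · exact hdRS q hp (Or.inr (Set.mem_insert _ _))
    · exact hvd ((d.mem_support_rotate_iff p hp).1 hvmem)
  · have h2 := hSA w d hd fun u hu huRS => by
      rcases huRS with (huR | huc) | huS
      · exact hdRS u hu (Or.inl huR)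
      · exact hmeet ⟨u, huc, hu⟩
      · exact hdRS u hu (Or.inr (Set.mem_insert_of_mem _ huS))
    have hmono := Set.ncard_le_ncard (Set.inter_subset_inter_right {u | u ∈ d.support}
      (Set.union_subset_union_right Q (Set.subset_insert (v : V) A)))
      (d.support.finite_toSet.inter_of_left _)
    omega

theorem exists_cyclesMeetTwice [Finite V] (hQ : IsBlocker G Q) (k : ℕ) (R : Set V)
    (hR : ¬ HasDisjointCyclesAvoiding G R (k + 1)) :
    ∃ S ⊆ Q, S.ncard ≤ k ∧ ∃ A ⊆ Qᶜ, A.ncard ≤ k ∧ G.CyclesMeetTwice (R ∪ S) (Q ∪ A) := by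
  classical
  induction k generalizing R with
  | zero =>
    refine ⟨∅, by simp, by simp, ∅, by simp, by simp, fun v c hc hcR => ?_⟩
    exact absurd (hasDisjointCyclesAvoiding_zero.cons hc (by simpa using hcR)) hR
  | succ k ih =>
    by_cases hsing : ∃ (q : V) (c : G.Walk q q), c.IsSingular Q ∧ ∀ u ∈ c.support, u ∉ R
    · exact exists_cyclesMeetTwice_succ hQ hR ih hsing
    · refine ⟨∅, by simp, by simp, ∅, by simp, by simp, ?_⟩
      simpa using cyclesMeetTwice_of_not_exists_isSingular hQ hsing

end SimpleGraph

/-- Given G with no k+1 disjoint cycles and a blocker Q, there are S ⊆ Q and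
A ⊆ V(G) \ Q, each of size ≤ k, such that every cycle of G − S has ≥ 2 vertices in Q ∪ A. -/
theorem stmt_6 {V : Type*} [Fintype V] (k : ℕ) (G : SimpleGraph V)
    (hG : ¬ HasDisjointCycles G (k + 1)) (Q : Set V) (hQ : IsBlocker G Q) :
    ∃ S ⊆ Q, S.ncard ≤ k ∧ ∃ A ⊆ Qᶜ, A.ncard ≤ k ∧
      ∀ (v : V) (c : G.Walk v v), c.IsCycle → (∀ u ∈ c.support, u ∉ S) →
        2 ≤ ({u : V | u ∈ c.support} ∩ (Q ∪ A)).ncard := by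
  obtain ⟨S, hSQ, hSk, A, hAQ, hAk, hSA⟩ :=
    exists_cyclesMeetTwice hQ k ∅ (hasDisjointCyclesAvoiding_empty_iff.not.2 hG)
  exact ⟨S, hSQ, hSk, A, hAQ, hAk, fun v c hc hcS => hSA v c hc (by simpa using hcS)⟩
end

section
/- For each positive integer t and each positive integer n, the number of forests F on vertex set {1,…,n} with at least t+1 connected components is at most |F_n| / t!. -/
/-!
Write `a k` for the number of forests on `n` vertices with at least `k` components. Adding an
edge between two vertices in different components of a forest with at least `k + 1` components
gives a forest with at least `k` components together with an oriented edge of it, and the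
forest is recovered by deleting that edge. If the component sizes `x₁, …, x_m` (`m ≥ k + 1`,
`xᵢ ≥ 1`) sum to `n`, then `∑ xᵢ² ≤ (n - m)² + 2n - m`, so there are at least `2k(n - k)` ordered
pairs to join; a forest with at least `k` components has at most `n - k` edges. Hence
`k * a (k + 1) ≤ a k`, and iterating gives `t! * a (t + 1) ≤ a 1 ≤ |F_n|`.
-/

open SimpleGraph Filter Real

open Finset
open scoped Nat

theorem Finset.sum_sq_add_two_mul_mul_sub_le_sq_sum {ι : Type*} {s : Finset ι} {f : ι → ℕ}
    {k : ℕ} (hf : ∀ i ∈ s, 1 ≤ f i) (hk : k + 1 ≤ #s) :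
    ∑ i ∈ s, f i ^ 2 + 2 * k * (∑ i ∈ s, f i - k) ≤ (∑ i ∈ s, f i) ^ 2 := by
  have hs : #s ≤ ∑ i ∈ s, f i := by simpa using card_nsmul_le_sum s f 1 hf
  have hsq : ∑ i ∈ s, ((f i : ℤ) - 1) ^ 2 ≤ (∑ i ∈ s, ((f i : ℤ) - 1)) ^ 2 :=
    sum_sq_le_sq_sum_of_nonneg fun i hi ↦ by have := hf i hi; omega
  simp only [sub_sq, sum_add_distrib, sum_sub_distrib, ← mul_sum, sum_const, nsmul_eq_mul,
    one_pow, mul_one] at hsq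
  zify [show k ≤ ∑ i ∈ s, f i by omega] at hs hk ⊢
  nlinarith [mul_nonneg (sub_nonneg.mpr hk)
      (by linarith : (0 : ℤ) ≤ 2 * ∑ i ∈ s, (f i : ℤ) - #s - k),
    (by exact_mod_cast Nat.le_mul_self k : (k : ℤ) ≤ k * k)]

theorem Nat.card_mul_le_card_mul_of_injective_sigma {α β : Type*} {X : α → Type*}
    {Y : β → Type*} [Finite α] [Finite β] [∀ a, Finite (X a)] [∀ b, Finite (Y b)] {L U : ℕ}
    (f : (Σ a, X a) → Σ b, Y b) (hf : Function.Injective f)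
    (hX : ∀ a, L ≤ Nat.card (X a)) (hY : ∀ b, Nat.card (Y b) ≤ U) :
    Nat.card α * L ≤ Nat.card β * U := by
  have := Fintype.ofFinite α
  have := Fintype.ofFinite β
  calc Nat.card α * L ≤ ∑ a, Nat.card (X a) := by
        simpa [Nat.card_eq_fintype_card, mul_comm] using
          card_nsmul_le_sum univ _ L fun a _ ↦ hX a
    _ = Nat.card (Σ a, X a) := Nat.card_sigma.symm
    _ ≤ Nat.card (Σ b, Y b) := Nat.card_le_card_of_injective f hf
    _ = ∑ b, Nat.card (Y b) := Nat.card_sigma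
    _ ≤ Nat.card β * U := by
        simpa [Nat.card_eq_fintype_card, mul_comm] using
          sum_le_card_nsmul univ _ U fun b _ ↦ hY b

namespace SimpleGraph

variable {V : Type*} {G : SimpleGraph V} {u v : V}

lemma adj_sup_edge_of_not_reachable (h : ¬G.Reachable u v) : (G ⊔ edge u v).Adj u v :=
  .inr <| (edge_adj ..).mpr ⟨.inl ⟨rfl, rfl⟩, fun e ↦ h (e ▸ .rfl)⟩

lemma Reachable.of_sup_edge {a b : V} (h : (G ⊔ edge u v).Reachable a b) :
    G.Reachable a b ∨ (G.Reachable a u ∧ G.Reachable v b) ∨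
      (G.Reachable a v ∧ G.Reachable u b) := by
  obtain ⟨w⟩ := h
  induction w with
  | nil => exact .inl .rfl
  | @cons x y z hxy _ ih =>
    rw [sup_adj, edge_adj] at hxy
    rcases hxy with hG | ⟨⟨rfl, rfl⟩ | ⟨rfl, rfl⟩, -⟩
    · rcases ih with r | ⟨r₁, r₂⟩ | ⟨r₁, r₂⟩
      · exact .inl (hG.reachable.trans r)
      · exact .inr (.inl ⟨hG.reachable.trans r₁, r₂⟩)
      · exact .inr (.inr ⟨hG.reachable.trans r₁, r₂⟩)
    · rcases ih with r | ⟨r₁, r₂⟩ | ⟨-, r₂⟩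
      · exact .inr (.inl ⟨.rfl, r⟩)
      · exact .inl (r₁.symm.trans r₂)
      · exact .inl r₂
    · rcases ih with r | ⟨-, r₂⟩ | ⟨r₁, r₂⟩
      · exact .inr (.inr ⟨.rfl, r⟩)
      · exact .inl r₂
      · exact .inl (r₁.symm.trans r₂)

lemma card_connectedComponent_sup_edge_add_one [Finite V] (h : ¬G.Reachable u v) :
    Nat.card (G ⊔ edge u v).ConnectedComponent + 1 = Nat.card G.ConnectedComponent := by
  set toSup := ConnectedComponent.map (Hom.ofLE (le_sup_left : G ≤ G ⊔ edge u v))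
  have htoSup (x : V) :
      toSup (G.connectedComponentMk x) = (G ⊔ edge u v).connectedComponentMk x := rfl
  -- `toSup` identifies the components of `u` and `v` and nothing else
  have hbij : Function.Bijective fun C : {C // C ≠ G.connectedComponentMk v} ↦ toSup C := by
    constructor
    · rintro ⟨C, hC⟩ ⟨D, hD⟩ hCD
      induction C using ConnectedComponent.ind
      induction D using ConnectedComponent.ind
      simp only [htoSup, ne_eq, ConnectedComponent.eq] at hCD hC hD
      rcases hCD.of_sup_edge with r | ⟨-, r⟩ | ⟨r, -⟩
      · exact Subtype.ext (ConnectedComponent.sound r)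
      · exact absurd r.symm hD
      · exact absurd r hC
    · intro C
      induction C using ConnectedComponent.ind with | h a => ?_
      by_cases ha : G.Reachable a v
      · refine ⟨⟨G.connectedComponentMk u, mt ConnectedComponent.exact h⟩, ?_⟩
        exact ConnectedComponent.sound
          ((adj_sup_edge_of_not_reachable h).reachable.trans (ha.mono le_sup_left).symm)
      · exact ⟨⟨G.connectedComponentMk a, mt ConnectedComponent.exact ha⟩, rfl⟩
  have := Fintype.ofFinite G.ConnectedComponent
  classical
  rw [← Nat.card_eq_of_bijective _ hbij, Nat.card_eq_fintype_card, Nat.card_eq_fintype_card,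
    Fintype.card_subtype_compl, Fintype.card_subtype_eq]
  have := Fintype.card_pos_iff.mpr ⟨G.connectedComponentMk v⟩
  omega

lemma card_connectedComponent_bot :
    Nat.card (⊥ : SimpleGraph V).ConnectedComponent = Nat.card V :=
  (Nat.card_eq_of_bijective _ ⟨fun _ _ h ↦ reachable_bot.mp (ConnectedComponent.exact h),
    fun C ↦ C.exists_rep⟩).symm

theorem IsAcyclic.card_edgeSet_add_card_connectedComponent [Finite V] (hG : G.IsAcyclic) :
    Nat.card G.edgeSet + Nat.card G.ConnectedComponent = Nat.card V := by
  induction hm : Nat.card G.edgeSet generalizing G with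
  | zero =>
    obtain rfl : G = ⊥ := by rwa [← edgeSet_eq_empty, ← Set.ncard_eq_zero]
    simp [card_connectedComponent_bot]
  | succ m ih =>
    obtain ⟨e, he⟩ :=
      Set.nonempty_of_ncard_ne_zero (s := G.edgeSet) (by simp_all [Nat.card_coe_set_eq])
    induction e with | h u v => ?_
    set G' := G.deleteEdges {s(u, v)}
    have hsup : G' ⊔ edge u v = G := sdiff_sup_cancel <| (G.edge_le_iff).2 <| .inr he
    have hG' : ¬G'.Reachable u v := isAcyclic_iff_forall_isBridge.mp hG he
    have hcard : Nat.card G'.edgeSet = m := by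
      have := Set.ncard_sdiff_singleton_add_one he
      rw [← Nat.card_coe_set_eq, ← Nat.card_coe_set_eq, hm] at this
      rw [G.edgeSet_deleteEdges]
      omega
    have := card_connectedComponent_sup_edge_add_one hG'
    rw [hsup] at this
    have := ih (G := G') (hG.anti (deleteEdges_le _)) hcard
    omega

lemma card_adj_eq_two_mul_card_edgeSet [Finite V] :
    Nat.card {p : V × V // G.Adj p.1 p.2} = 2 * Nat.card G.edgeSet := by
  classical
  have := Fintype.ofFinite V
  rw [Nat.card_congr ⟨fun p ↦ (⟨p.1, p.2⟩ : G.Dart), fun d ↦ ⟨d.toProd, d.adj⟩,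
      fun _ ↦ rfl, fun _ ↦ rfl⟩,
    Nat.card_eq_fintype_card, dart_card_eq_twice_card_edges, edgeFinset_card,
    Nat.card_eq_fintype_card]

theorem IsAcyclic.card_adj_le [Finite V] (hG : G.IsAcyclic) {k : ℕ}
    (hk : k ≤ Nat.card G.ConnectedComponent) :
    Nat.card {p : V × V // G.Adj p.1 p.2} ≤ 2 * (Nat.card V - k) := by
  have := hG.card_edgeSet_add_card_connectedComponent
  rw [card_adj_eq_two_mul_card_edgeSet]
  omega

lemma sum_card_supp [Finite V] [Fintype G.ConnectedComponent] :
    ∑ C : G.ConnectedComponent, Nat.card C.supp = Nat.card V := by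
  rw [← Nat.card_sigma]
  exact Nat.card_congr (Equiv.sigmaFiberEquiv G.connectedComponentMk)

def reachableEquivSigmaSupp :
    {p : V × V // G.Reachable p.1 p.2} ≃ Σ C : G.ConnectedComponent, C.supp × C.supp where
  toFun p :=
    ⟨G.connectedComponentMk p.1.1, ⟨p.1.1, rfl⟩, ⟨p.1.2, (ConnectedComponent.sound p.2).symm⟩⟩
  invFun x := ⟨(x.2.1, x.2.2), ConnectedComponent.exact (x.2.1.2.trans x.2.2.2.symm)⟩
  left_inv _ := rfl
  right_inv := by
    rintro ⟨C, ⟨a, rfl⟩, _⟩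
    rfl

lemma card_not_reachable_add_sum_sq [Finite V] [Fintype G.ConnectedComponent] :
    Nat.card {p : V × V // ¬G.Reachable p.1 p.2} +
      ∑ C : G.ConnectedComponent, Nat.card C.supp ^ 2 = Nat.card V ^ 2 := by
  classical
  have := Nat.card_congr (Equiv.sumCompl fun p : V × V ↦ G.Reachable p.1 p.2)
  rw [Nat.card_sum, Nat.card_congr reachableEquivSigmaSupp, Nat.card_sigma] at this
  simp only [Nat.card_prod, ← sq] at this
  omega

theorem two_mul_mul_sub_le_card_not_reachable [Finite V] {k : ℕ}
    (hk : k + 1 ≤ Nat.card G.ConnectedComponent) :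
    2 * k * (Nat.card V - k) ≤ Nat.card {p : V × V // ¬G.Reachable p.1 p.2} := by
  have := Fintype.ofFinite G.ConnectedComponent
  have hsupp (C : G.ConnectedComponent) (_ : C ∈ univ) : 1 ≤ Nat.card C.supp :=
    have := C.nonempty_supp.to_subtype
    Nat.card_pos
  have := sum_sq_add_two_mul_mul_sub_le_sq_sum hsupp
    (by rwa [card_univ, ← Nat.card_eq_fintype_card])
  rw [sum_card_supp] at this
  have := card_not_reachable_add_sum_sq (G := G)
  omega

end SimpleGraph

noncomputable def forestCountAtLeast (V : Type*) (k : ℕ) : ℕ :=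
  Nat.card {F : SimpleGraph V // F.IsAcyclic ∧ k ≤ Nat.card F.ConnectedComponent}

section forestCountAtLeast

variable {V : Type*} [Finite V]

theorem mul_forestCountAtLeast_succ_le (k : ℕ) :
    k * forestCountAtLeast V (k + 1) ≤ forestCountAtLeast V k := by
  let A := {F : SimpleGraph V // F.IsAcyclic ∧ k + 1 ≤ Nat.card F.ConnectedComponent}
  let B := {F : SimpleGraph V // F.IsAcyclic ∧ k ≤ Nat.card F.ConnectedComponent}
  rcases Nat.eq_zero_or_pos (forestCountAtLeast V (k + 1)) with hA | hA
  · simp [hA]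
  obtain ⟨⟨F, -, hF⟩⟩ := (Nat.card_pos_iff.mp hA).1
  have hk : k < Nat.card V := card_connectedComponent_bot (V := V) ▸
    (ConnectedComponent.card_le_card_of_le bot_le).trans_lt' hF
  let join : (Σ F : A, {p : V × V // ¬F.1.Reachable p.1 p.2}) →
      Σ F : B, {p : V × V // F.1.Adj p.1 p.2} := fun x ↦
    ⟨⟨x.1.1 ⊔ edge x.2.1.1 x.2.1.2, x.1.2.1.sup_edge_of_not_reachable x.2.2,
      by have := card_connectedComponent_sup_edge_add_one x.2.2; have := x.1.2.2; omega⟩,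
     ⟨x.2.1, adj_sup_edge_of_not_reachable x.2.2⟩⟩
  have hjoin : Function.Injective join := by
    rintro ⟨⟨F, hF⟩, ⟨⟨u, v⟩, huv⟩⟩ ⟨⟨F', hF'⟩, ⟨⟨u', v'⟩, huv'⟩⟩ h
    obtain ⟨rfl, rfl⟩ : u = u' ∧ v = v' := Prod.ext_iff.mp (congrArg (fun x ↦ x.2.1) h)
    have hsup : F ⊔ edge u v = F' ⊔ edge u v := congrArg (fun x ↦ x.1.1) h
    obtain rfl : F = F' := by
      rw [← F.sdiff_edge (mt Adj.reachable huv), ← F'.sdiff_edge (mt Adj.reachable huv'),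
        ← sup_sdiff_right_self, hsup, sup_sdiff_right_self]
    rfl
  have := Nat.card_mul_le_card_mul_of_injective_sigma join hjoin
    (fun F ↦ two_mul_mul_sub_le_card_not_reachable F.2.2) (fun F ↦ F.2.1.card_adj_le F.2.2)
  refine Nat.le_of_mul_le_mul_right (c := 2 * (Nat.card V - k)) ?_ (by omega)
  simpa only [forestCountAtLeast, mul_comm, mul_left_comm, mul_assoc] using this

theorem factorial_mul_forestCountAtLeast_succ_le (t : ℕ) :
    t ! * forestCountAtLeast V (t + 1) ≤ forestCountAtLeast V 1 := by
  induction t with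
  | zero => simp
  | succ t ih =>
    calc (t + 1)! * forestCountAtLeast V (t + 1 + 1)
        = t ! * ((t + 1) * forestCountAtLeast V (t + 1 + 1)) := by
          rw [Nat.factorial_succ, mul_comm (t + 1), mul_assoc]
      _ ≤ t ! * forestCountAtLeast V (t + 1) :=
          Nat.mul_le_mul_left _ (mul_forestCountAtLeast_succ_le _)
      _ ≤ forestCountAtLeast V 1 := ih

end forestCountAtLeast

theorem stmt_13_general (t n : ℕ) :
    (Nat.card {F : SimpleGraph (Fin n) // F.IsAcyclic ∧
        t + 1 ≤ Nat.card F.ConnectedComponent} : ℝ)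
      ≤ (forestCount n : ℝ) / (Nat.factorial t : ℝ) := by
  have hforest : forestCountAtLeast (Fin n) 1 ≤ forestCount n :=
    Nat.card_le_card_of_injective (fun F ↦ ⟨F.1, F.2.1⟩)
      (Function.Injective.of_comp (f := Subtype.val) Subtype.val_injective)
  rw [le_div_iff₀ (by positivity)]
  exact_mod_cast (mul_comm _ _).trans_le
    ((factorial_mul_forestCountAtLeast_succ_le t).trans hforest)

/-- the number of forests on {1,…,n} with at least t+1 components is at
most |F_n| / t!. -/
theorem stmt_13 (t n : ℕ) (ht : 1 ≤ t) (hn : 1 ≤ n) :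
    (Nat.card {F : SimpleGraph (Fin n) // F.IsAcyclic ∧
        t + 1 ≤ Nat.card F.ConnectedComponent} : ℝ)
      ≤ (forestCount n : ℝ) / (Nat.factorial t : ℝ) :=
  stmt_13_general t n
end

section
/- Let k be a positive integer, let G be a finite graph and let S0 be a set of k vertices of G such that: (a) G − S0 is a forest, and (b) for each vertex s ∈ S0 there are k+1 spikes of the forest G − S0 such that s is adjacent to both vertices of each of these spikes (so s forms a triangle with each). Then S0 is the unique blocker of size at most k in G: every blocker B of G with |B| ≤ k satisfies B = S0. -/
open SimpleGraph Filter Real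

/-!
A blocker avoiding `s ∈ S0` must meet each of the `k + 1` triangles that `s` forms with its
spikes in a vertex of the spike. Distinct spikes are disjoint, so such a blocker has at least
`k + 1` vertices. Hence every blocker of size at most `k` contains `S0`, and equals it by
cardinality.
-/

open Finset in
theorem Finset.card_le_card_of_pairwiseDisjoint_of_forall_exists_mem {ι α : Type*}
    {s : Finset ι} {t : Finset α} {f : ι → Set α} (hf : (s : Set ι).PairwiseDisjoint f)
    (hmeet : ∀ i ∈ s, ∃ x ∈ t, x ∈ f i) : #s ≤ #t :=
  card_le_card_of_forall_subsingleton (fun i x => x ∈ f i) hmeet fun x _ _ hi _ hj => by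
    by_contra hij
    exact Set.disjoint_left.mp (hf hi.1 hj.1 hij) hi.2 hj.2

theorem IsBlocker.mem_or_mem_or_mem {V : Type*} {G : SimpleGraph V} {B : Set V}
    (hB : IsBlocker G B) {a b c : V} (hab : G.Adj a b) (hac : G.Adj a c) (hbc : G.Adj b c) :
    a ∈ B ∨ b ∈ B ∨ c ∈ B := by
  classical
  by_contra! h
  obtain ⟨ha, hb, hc⟩ := h
  apply hB.cliqueFree le_rfl {⟨a, ha⟩, ⟨b, hb⟩, ⟨c, hc⟩}
  exact is3Clique_triple_iff.mpr ⟨hab, hac, hbc⟩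

theorem SimpleGraph.ConnectedComponent.supp_eq_of_forall_adj_mem {V : Type*}
    {G : SimpleGraph V} {S : Set V} {u : V} (hclosed : ∀ x ∈ S, ∀ y, G.Adj x y → y ∈ S)
    (hu : u ∈ S) (hreach : ∀ x ∈ S, G.Reachable u x) : (G.connectedComponentMk u).supp = S := by
  have walk_mem : ∀ {x y : V}, G.Walk x y → x ∈ S → y ∈ S := by
    intro x y q
    induction q with
    | nil => exact id
    | cons hadj _ ih => exact fun hx => ih (hclosed _ hx _ hadj)
  ext w
  rw [ConnectedComponent.mem_supp_iff, ConnectedComponent.eq]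
  exact ⟨fun ⟨q⟩ => walk_mem q.reverse hu, fun hw => (hreach w hw).symm⟩

namespace IsSpike

variable {W : Type*} {F : SimpleGraph W} {u v u' v' : W}

theorem neighborSet_fst (h : IsSpike F u v) : F.neighborSet u = {v} := by
  obtain ⟨x, hx⟩ := Set.ncard_eq_one.mp h.2.1
  have hvx : v ∈ F.neighborSet u := h.1
  rw [hx, Set.mem_singleton_iff] at hvx
  rw [hx, hvx]

theorem fst_ne_snd_of_isSpike (h : IsSpike F u v) (h' : IsSpike F u' v') : u ≠ v' := by
  rintro rfl
  have := h.2.1.symm.trans h'.2.2.1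
  omega

theorem snd_eq_of_fst_eq (h : IsSpike F u v) (h' : IsSpike F u' v') (hu : u = u') : v = v' := by
  subst hu
  simpa [h.neighborSet_fst] using h'.neighborSet_fst

/-- Two spikes sharing their degree-2 vertex would span a whole component that is a path on
three vertices, which the definition of a spike excludes. -/
theorem fst_eq_of_snd_eq (h : IsSpike F u v) (h' : IsSpike F u' v') (hv : v = v') : u = u' := by
  subst hv
  by_contra huu'
  have hNv : F.neighborSet v = {u, u'} := by
    refine (Set.eq_of_subset_of_ncard_le (fun x hx => ?_) ?_ ?_).symm
    · rcases hx with rfl | rfl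
      exacts [h.1.symm, h'.1.symm]
    · rw [h.2.2.1, Set.ncard_pair huu']
    · exact Set.finite_of_ncard_ne_zero (by rw [h.2.2.1]; simp)
  have hnadj : ¬ F.Adj u u' := fun hadj => by
    have : u' ∈ F.neighborSet u := hadj
    rw [h.neighborSet_fst, Set.mem_singleton_iff] at this
    exact h'.fst_ne_snd_of_isSpike h this
  refine h.2.2.2 ⟨u, v, u', h.1.ne, h'.1.ne.symm, huu', h.1, h'.1.symm, hnadj, ?_⟩
  refine ConnectedComponent.supp_eq_of_forall_adj_mem ?_ (by simp) ?_
  · rintro x (rfl | rfl | rfl) y hy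
    · have : y ∈ F.neighborSet x := hy
      simp_all [h.neighborSet_fst]
    · have : y ∈ F.neighborSet x := hy
      rw [hNv] at this
      rcases this with rfl | rfl <;> simp
    · have : y ∈ F.neighborSet x := hy
      simp_all [h'.neighborSet_fst]
  · rintro x (rfl | rfl | rfl)
    exacts [Reachable.refl _, h.1.reachable, h.1.reachable.trans h'.1.symm.reachable]

theorem disjoint (h : IsSpike F u v) (h' : IsSpike F u' v') (hne : (u, v) ≠ (u', v')) :
    Disjoint ({u, v} : Set W) {u', v'} := by
  have huu' : u ≠ u' := fun hu => hne (Prod.ext hu (h.snd_eq_of_fst_eq h' hu))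
  have hvv' : v ≠ v' := fun hv => huu' (h.fst_eq_of_snd_eq h' hv)
  simp only [Set.disjoint_insert_left, Set.disjoint_insert_right, Set.disjoint_singleton,
    Set.mem_insert_iff, Set.mem_singleton_iff, not_or]
  exact ⟨⟨huu'.symm, h'.fst_ne_snd_of_isSpike h⟩, h.fst_ne_snd_of_isSpike h', hvv'⟩

end IsSpike

theorem stmt_16_general {V : Type*} (k : ℕ)
    (G : SimpleGraph V) (S0 : Finset V) (hcard : S0.card = k)
    (hspikes : ∀ s ∈ S0,
      ∃ p : Fin (k + 1) → (((S0 : Set V)ᶜ : Set V) × ((S0 : Set V)ᶜ : Set V)),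
        Function.Injective p ∧
        ∀ i, IsSpike (G.induce ((S0 : Set V)ᶜ)) (p i).1 (p i).2 ∧
          G.Adj s ((p i).1 : V) ∧ G.Adj s ((p i).2 : V)) :
    ∀ B : Finset V, B.card ≤ k → IsBlocker G ↑B → B = S0 := by
  intro B hB hblock
  suffices hS0B : S0 ⊆ B from (Finset.eq_of_subset_of_card_le hS0B (hcard ▸ hB)).symm
  intro s hs
  by_contra hsB
  obtain ⟨p, hp_inj, hp⟩ := hspikes s hs
  let spike (i : Fin (k + 1)) : Set V := Subtype.val '' {(p i).1, (p i).2}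
  have hdisj :
      ((Finset.univ : Finset (Fin (k + 1))) : Set (Fin (k + 1))).PairwiseDisjoint spike :=
    fun i _ j _ hij => (Set.disjoint_image_iff Subtype.val_injective).mpr
      ((hp i).1.disjoint (hp j).1 (hp_inj.ne hij))
  have hmeet : ∀ i ∈ Finset.univ, ∃ x ∈ B, x ∈ spike i := by
    intro i _
    rcases hblock.mem_or_mem_or_mem (hp i).2.1 (hp i).2.2 (hp i).1.1 with h | h | h
    · exact absurd h hsB
    · exact ⟨_, h, (p i).1, by simp, rfl⟩
    · exact ⟨_, h, (p i).2, by simp, rfl⟩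
  have := Finset.card_le_card_of_pairwiseDisjoint_of_forall_exists_mem hdisj hmeet
  simp only [Finset.card_univ, Fintype.card_fin] at this
  omega

/-- if G − S0 is a forest and each s ∈ S0 forms triangles with k+1 distinct
spikes of G − S0, then S0 is the unique blocker of size at most k in G. -/
theorem stmt_16 {V : Type*} [Fintype V] [DecidableEq V] (k : ℕ) (hk : 1 ≤ k)
    (G : SimpleGraph V) (S0 : Finset V) (hcard : S0.card = k)
    (hforest : (G.induce ((S0 : Set V)ᶜ)).IsAcyclic)
    (hspikes : ∀ s ∈ S0,
      ∃ p : Fin (k + 1) → (((S0 : Set V)ᶜ : Set V) × ((S0 : Set V)ᶜ : Set V)),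
        Function.Injective p ∧
        ∀ i, IsSpike (G.induce ((S0 : Set V)ᶜ)) (p i).1 (p i).2 ∧
          G.Adj s ((p i).1 : V) ∧ G.Adj s ((p i).2 : V)) :
    ∀ B : Finset V, B.card ≤ k → IsBlocker G ↑B → B = S0 :=
  stmt_16_general k G S0 hcard hspikes
end

section
/- For each positive integer k there exist a constant c > 0 and an integer n0 such that for all n ≥ n0: the number of graphs G in (Apex^k F)_n such that for every connected component H of G with the maximum number of vertices the graph G − V(H) contains a cycle, is at most e^{-c n} · |(Apex^k F)_n|. That is, with probability 1 − e^{-Ω(n)}, for a uniformly random graph from (Apex^k F)_n the subgraph induced on the vertices outside a largest component is a forest. -/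
open SimpleGraph Filter Real

/-!
Let `B` be a blocker of `G` with `|B| ≤ k` and let `q = ⌊n/8⌋ + 1`. Graphs are counted by
injecting them, together with extra data, into apex graphs paired with a comparatively small
amount of additional information.

If `G − B` has at least `2q` components, join representatives `s₁, …, s_q` of `q` of them to
representatives `t_{g(i)}` of `q` others, for any of the `q^q` maps `g`. The edges form a star
forest between distinct components of the forest `G − B`, so `B` remains a blocker; and `G`, `g`
are recovered from the new graph and the set of representatives. Hence these graphs are at most
a `2^n / q^q` fraction of `(Apex^k F)_n`.

Otherwise, if every largest component `H` has a cycle outside it, that cycle meets `B`, so some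
`r ∈ B` lies in a component `T ≠ H`, and `|T| ≤ n/2`. Joining `r` to any set `X` of vertices
outside `T` keeps `B` a blocker, since the new edges meet `B`. The graph `G − B` is unchanged,
so `B`, `B ∩ T` and the set of the fewer than `2q` components of `G − B` lying in `T` determine
`T`; then `G` is the new graph minus the edges leaving `T`, and `X` is the set of neighbours of
`r` outside `T`. Hence these graphs are at most a `poly(n) · 4^q / 2^{n/2}` fraction.

Both fractions are below `2^{-q-1}` for large `n`, which gives `c = log 2 / 8`.
-/

lemma Finset.exists_embedding_forall_mem {ι : Type*} [Fintype ι] {V : Type*} {W : Finset V}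
    (h : Fintype.card ι ≤ W.card) : ∃ f : ι ↪ V, ∀ i, f i ∈ W :=
  let ⟨e⟩ := Function.Embedding.nonempty_of_card_le (h.trans (Fintype.card_coe W).ge)
  ⟨e.trans (.subtype _), fun i => (e i).2⟩

namespace SimpleGraph

variable {V : Type*} {G F H K : SimpleGraph V} {B : Set V} {u v : V}

lemma isAcyclic_spanningCoe_iff {s : Set V} {H : SimpleGraph s} :
    H.spanningCoe.IsAcyclic ↔ H.IsAcyclic := by
  refine ⟨IsAcyclic.of_map _, fun hH v c hc => ?_⟩
  have hs : ∀ x ∈ c.support, x ∈ s := fun x hx => by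
    obtain ⟨e, he, hxe⟩ := (Walk.mem_support_iff_exists_mem_edges_of_not_nil hc.not_nil).1 hx
    induction e with
    | h a b =>
      obtain ⟨a', b', -, rfl, rfl⟩ := (map_adj _ _ _ _).1 (c.adj_of_mem_edges he)
      rcases Sym2.mem_iff.1 hxe with rfl | rfl <;> simp
  have hH' : (H.spanningCoe.induce s).IsAcyclic := by rwa [induce_spanningCoe]
  refine hH' (c.induce s hs)
    ((Walk.isCycle_map_iff_of_injective
      (f := (Embedding.induce (G := H.spanningCoe) s).toHom) Subtype.val_injective).1 ?_)
  rwa [Walk.map_induce]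

lemma Reachable.of_sup_of_forall_not_reachable {x y : V}
    (hH : ∀ a b, H.Adj a b → ¬ F.Reachable x a) (h : (F ⊔ H).Reachable x y) :
    F.Reachable x y := by
  obtain ⟨p⟩ := h
  suffices ∀ {a b} (p : (F ⊔ H).Walk a b), F.Reachable x a → F.Reachable x b from this p .rfl
  intro a b p
  induction p with
  | nil => exact id
  | cons hab _ ih => exact fun ha => ih <| hab.elim (ha.trans ·.reachable) (absurd ha <| hH _ _ ·)

theorem IsAcyclic.sup_iSup_edge {ι : Type*} [Finite ι] (hF : F.IsAcyclic) (s t : ι → V)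
    (hs : Pairwise fun i j => ¬ F.Reachable (s i) (s j)) (ht : ∀ i j, ¬ F.Reachable (s i) (t j)) :
    (F ⊔ ⨆ i, edge (s i) (t i)).IsAcyclic := by
  classical
  have := Fintype.ofFinite ι
  suffices ∀ I : Finset ι, (F ⊔ ⨆ i ∈ I, edge (s i) (t i)).IsAcyclic by
    simpa using this Finset.univ
  intro I
  induction I using Finset.induction_on with
  | empty => simpa using hF
  | insert j I hj ih =>
    rw [Finset.iSup_insert, sup_left_comm, sup_comm]
    refine ih.sup_edge_of_not_reachable fun h => ht j j (h.of_sup_of_forall_not_reachable ?_)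
    intro a b hab
    simp only [iSup_adj, edge_adj] at hab
    obtain ⟨i, hi, (⟨rfl, -⟩ | ⟨rfl, -⟩), -⟩ := hab
    · exact hs (ne_of_mem_of_not_mem hi hj).symm
    · exact ht j i

lemma sup_sdiff_eq_left_of_disjoint (hG : Disjoint G K) (hH : H ≤ K) : (G ⊔ H) \ K = G := by
  rw [sup_sdiff, hG.sdiff_eq_left, sdiff_eq_bot_iff.2 hH, sup_bot_eq]

/-- `G − B`, keeping the vertices of `B` as isolated vertices. -/
def outside (G : SimpleGraph V) (B : Set V) : SimpleGraph V := (G.induce Bᶜ).spanningCoe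

@[simp] lemma outside_adj : (G.outside B).Adj u v ↔ G.Adj u v ∧ u ∉ B ∧ v ∉ B := by
  simp [outside, map_adj]

lemma outside_le : G.outside B ≤ G := fun _ _ h => (outside_adj.1 h).1

lemma outside_sup : (G ⊔ H).outside B = G.outside B ⊔ H.outside B := by
  ext u v; simp [or_and_right]

lemma outside_eq_self (h : ∀ u v, H.Adj u v → u ∉ B) : H.outside B = H := by
  ext u v
  exact ⟨fun h' => (outside_adj.1 h').1, fun h' => outside_adj.2 ⟨h', h u v h', h v u h'.symm⟩⟩

lemma outside_eq_bot (h : ∀ u v, H.Adj u v → u ∈ B ∨ v ∈ B) : H.outside B = ⊥ := by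
  ext u v
  simpa using fun h' hu => (h u v h').resolve_left hu

lemma Reachable.notMem_of_outside (h : (G.outside B).Reachable u v) (hu : u ∉ B) : v ∉ B := by
  obtain ⟨p⟩ := h.symm
  cases p with
  | nil => exact hu
  | cons h _ => exact (outside_adj.1 h).2.1

lemma ConnectedComponent.two_mul_ncard_supp_le [Finite V] {C D : G.ConnectedComponent}
    (h : C ≠ D) (hCD : C.supp.ncard ≤ D.supp.ncard) : 2 * C.supp.ncard ≤ Nat.card V :=
  calc 2 * C.supp.ncard ≤ C.supp.ncard + D.supp.ncard := by omega
  _ = (C.supp ∪ D.supp).ncard :=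
    (Set.ncard_union_eq (G.pairwise_disjoint_supp_connectedComponent h)).symm
  _ ≤ Nat.card V := Set.ncard_le_card _

lemma ConnectedComponent.exists_embedding_notMem_supp [Fintype V] (C : G.ConnectedComponent)
    (h : 2 * C.supp.ncard ≤ Nat.card V) :
    ∃ e : Fin (Fintype.card V - Fintype.card V / 2) ↪ V, ∀ i, e i ∉ C.supp := by
  classical
  have hcard : Fintype.card V - Fintype.card V / 2 ≤ C.supp.toFinsetᶜ.card := by
    rw [Finset.card_compl, ← Set.ncard_eq_toFinset_card']
    rw [Nat.card_eq_fintype_card] at h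
    omega
  obtain ⟨e, he⟩ := Finset.exists_embedding_forall_mem ((Fintype.card_fin _).trans_le hcard)
  exact ⟨e, fun i => by simpa using he i⟩

noncomputable def compRep (H : SimpleGraph V) (v : V) : V := Quot.out (H.connectedComponentMk v)

lemma reachable_compRep (H : SimpleGraph V) (v : V) : H.Reachable v (compRep H v) :=
  ConnectedComponent.exact (Quot.out_eq _).symm

lemma compRep_eq_of_reachable (h : H.Reachable u v) : compRep H u = compRep H v := by
  rw [compRep, compRep, ConnectedComponent.eq.2 h]

section Representatives

variable [Fintype V] [DecidableEq V] {B : Finset V}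

noncomputable def compReps (H : SimpleGraph V) (B : Finset V) : Finset V := Bᶜ.image (compRep H)

lemma compRep_mem_compReps (hv : v ∉ B) : compRep H v ∈ compReps H B :=
  Finset.mem_image_of_mem _ (Finset.mem_compl.2 hv)

lemma not_reachable_of_mem_compReps (hu : u ∈ compReps H B) (hv : v ∈ compReps H B)
    (huv : u ≠ v) : ¬ H.Reachable u v := by
  obtain ⟨a, -, rfl⟩ := Finset.mem_image.1 hu
  obtain ⟨b, -, rfl⟩ := Finset.mem_image.1 hv
  refine fun h => huv (compRep_eq_of_reachable ?_)
  exact (reachable_compRep H a).trans (h.trans (reachable_compRep H b).symm)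

lemma notMem_of_mem_compReps_outside (hu : u ∈ compReps (G.outside B) B) : u ∉ B := by
  obtain ⟨a, ha, rfl⟩ := Finset.mem_image.1 hu
  exact (reachable_compRep _ a).notMem_of_outside (Finset.mem_compl.1 ha)

lemma not_adj_of_mem_compReps_outside (hu : u ∈ compReps (G.outside B) B)
    (hv : v ∈ compReps (G.outside B) B) : ¬ G.Adj u v := fun h =>
  not_reachable_of_mem_compReps hu hv h.ne <| Adj.reachable <|
    outside_adj.2 ⟨h, notMem_of_mem_compReps_outside hu, notMem_of_mem_compReps_outside hv⟩

end Representatives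

end SimpleGraph

variable {V : Type*} {G : SimpleGraph V} {u v : V}

lemma isBlocker_iff_isAcyclic_outside {B : Set V} : IsBlocker G B ↔ (G.outside B).IsAcyclic :=
  isAcyclic_spanningCoe_iff.symm

lemma IsBlocker.exists_mem_of_not_isAcyclic {B S : Set V} (hB : IsBlocker G B)
    (hS : ¬ (G.induce S).IsAcyclic) : ∃ b ∈ B, b ∈ S := by
  by_contra! h
  exact hS (IsAcyclic.embedding (G.induceHomOfLE fun x hx hxB => h x hxB hx) hB)

def IsApex (k : ℕ) (G : SimpleGraph V) : Prop := ∃ B : Finset V, B.card ≤ k ∧ IsBlocker G ↑B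

noncomputable def blocker (k : ℕ) (G : SimpleGraph V) : Finset V :=
  Classical.epsilon fun B : Finset V => B.card ≤ k ∧ IsBlocker G ↑B

lemma IsApex.blocker_spec {k : ℕ} (h : IsApex k G) :
    (blocker k G).card ≤ k ∧ IsBlocker G ↑(blocker k G) :=
  Classical.epsilon_spec h

noncomputable def blockerReps [Fintype V] [DecidableEq V] (k : ℕ) (G : SimpleGraph V) :
    Finset V :=
  compReps (G.outside (blocker k G)) (blocker k G)

def CycleOffLargest (G : SimpleGraph V) : Prop :=
  ∀ H : G.ConnectedComponent, (∀ H' : G.ConnectedComponent, H'.supp.ncard ≤ H.supp.ncard) →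
    ¬ (G.induce H.suppᶜ).IsAcyclic

lemma CycleOffLargest.exists_mem_two_mul_ncard_supp_le [Finite V] [Nonempty V] {B : Set V}
    (hG : CycleOffLargest G) (hB : IsBlocker G B) :
    ∃ r ∈ B, 2 * (G.connectedComponentMk r).supp.ncard ≤ Nat.card V := by
  obtain ⟨H, hH⟩ := Finite.exists_max fun H : G.ConnectedComponent => H.supp.ncard
  obtain ⟨r, hrB, hrH⟩ := hB.exists_mem_of_not_isAcyclic (hG H hH)
  exact ⟨r, hrB, ConnectedComponent.two_mul_ncard_supp_le
    (fun h => hrH ((ConnectedComponent.mem_supp_iff _ _).2 h)) (hH _)⟩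

lemma card_finset_card_le_le [Fintype V] (k : ℕ) :
    Nat.card {S : Finset V // S.card ≤ k} ≤ (k + 1) * (Fintype.card V + 1) ^ k := by
  classical
  rw [Nat.card_eq_fintype_card, Fintype.card_subtype]
  calc (Finset.univ.filter fun S : Finset V => S.card ≤ k).card
      ≤ ((Finset.range (k + 1)).biUnion fun j => Finset.powersetCard j Finset.univ).card :=
        Finset.card_le_card fun S hS => by simpa [Nat.lt_succ_iff] using hS
    _ ≤ ∑ j ∈ Finset.range (k + 1), (Finset.powersetCard j (Finset.univ : Finset V)).card :=
        Finset.card_biUnion_le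
    _ ≤ ∑ j ∈ Finset.range (k + 1), (Fintype.card V + 1) ^ k := Finset.sum_le_sum fun j hj => by
        rw [Finset.card_powersetCard, Finset.card_univ]
        exact (Nat.choose_le_pow _ _).trans ((Nat.pow_le_pow_left (by omega) _).trans
          (Nat.pow_le_pow_right (by omega) (by simpa [Nat.lt_succ_iff] using hj)))
    _ = (k + 1) * (Fintype.card V + 1) ^ k := by simp

section ManyComponents

variable {ι κ : Type*} {f : ι ⊕ κ → V}

def linkGraph (f : ι ⊕ κ → V) (g : ι → κ) : SimpleGraph V :=
  ⨆ i, edge (f (.inl i)) (f (.inr (g i)))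

lemma linkGraph_adj {g : ι → κ} : (linkGraph f g).Adj u v ↔
    ∃ i, (u = f (.inl i) ∧ v = f (.inr (g i)) ∨ u = f (.inr (g i)) ∧ v = f (.inl i)) ∧ u ≠ v := by
  simp [linkGraph, edge_adj]

lemma sup_linkGraph_sdiff {W : Finset V} (hGW : ∀ u ∈ W, ∀ v ∈ W, ¬ G.Adj u v)
    (hfW : ∀ x, f x ∈ W) (g : ι → κ) :
    (G ⊔ linkGraph f g) \ fromRel (fun u v => u ∈ W ∧ v ∈ W) = G := by
  refine sup_sdiff_eq_left_of_disjoint (disjoint_left.2 fun u v huv h => ?_) fun u v huv => ?_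
  · obtain ⟨-, ⟨hu, hv⟩ | ⟨hv, hu⟩⟩ := fromRel_adj _ _ _ |>.1 h
    · exact hGW u hu v hv huv
    · exact hGW u hu v hv huv
  · obtain ⟨i, (⟨rfl, rfl⟩ | ⟨rfl, rfl⟩), hne⟩ := linkGraph_adj.1 huv <;>
      exact (fromRel_adj _ _ _).2 ⟨hne, .inl ⟨hfW _, hfW _⟩⟩

lemma sup_linkGraph_adj_iff (hf : f.Injective) {W : Finset V}
    (hGW : ∀ u ∈ W, ∀ v ∈ W, ¬ G.Adj u v) (hfW : ∀ x, f x ∈ W) (g : ι → κ) (i : ι) (j : κ) :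
    (G ⊔ linkGraph f g).Adj (f (.inl i)) (f (.inr j)) ↔ g i = j := by
  refine ⟨fun h => ?_, fun h => .inr (linkGraph_adj.2 ⟨i, .inl ⟨rfl, h ▸ rfl⟩, hf.ne (by simp)⟩)⟩
  obtain h | h := h
  · exact absurd h (hGW _ (hfW _) _ (hfW _))
  · obtain ⟨i', (⟨h1, h2⟩ | ⟨h1, -⟩), -⟩ := linkGraph_adj.1 h
    · cases hf h1; cases hf h2; rfl
    · cases hf h1

variable [Fintype V] [DecidableEq V]

lemma IsBlocker.sup_linkGraph [Finite ι] {B : Finset V} (hB : IsBlocker G ↑B) (hf : f.Injective)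
    (hfW : ∀ x, f x ∈ compReps (G.outside B) B) (g : ι → κ) :
    IsBlocker (G ⊔ linkGraph f g) ↑B := by
  rw [isBlocker_iff_isAcyclic_outside] at hB ⊢
  rw [outside_sup, outside_eq_self (H := linkGraph f g)]
  · refine hB.sup_iSup_edge (fun i => f (.inl i)) (fun i => f (.inr (g i)))
      (fun i j hij => ?_) fun i j => ?_ <;>
      refine not_reachable_of_mem_compReps (hfW _) (hfW _) (hf.ne ?_)
    · simpa using hij
    · simp
  · intro u v huv
    obtain ⟨i, (⟨rfl, -⟩ | ⟨rfl, -⟩), -⟩ := linkGraph_adj.1 huv <;>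
      exact notMem_of_mem_compReps_outside (hfW _)

theorem card_many_components_mul_le (k q : ℕ) :
    Nat.card {G : SimpleGraph V // IsApex k G ∧ 2 * q ≤ (blockerReps k G).card} * q ^ q ≤
      Nat.card {G : SimpleGraph V // IsApex k G} * 2 ^ Fintype.card V := by
  classical
  choose f hfW using fun G : {G : SimpleGraph V // IsApex k G ∧ 2 * q ≤ (blockerReps k G).card} =>
    Finset.exists_embedding_forall_mem (ι := Fin q ⊕ Fin q) (by simpa [two_mul] using G.2.2)
  have hGW (G : {G : SimpleGraph V // IsApex k G ∧ 2 * q ≤ (blockerReps k G).card}) :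
      ∀ u ∈ blockerReps k G.1, ∀ v ∈ blockerReps k G.1, ¬ G.1.Adj u v :=
    fun _ hu _ hv => not_adj_of_mem_compReps_outside hu hv
  let Φ (p : {G : SimpleGraph V // IsApex k G ∧ 2 * q ≤ (blockerReps k G).card} ×
      (Fin q → Fin q)) : {G : SimpleGraph V // IsApex k G} × Finset V :=
    (⟨p.1.1 ⊔ linkGraph (f p.1) p.2, blocker k p.1.1, p.1.2.1.blocker_spec.1,
      p.1.2.1.blocker_spec.2.sup_linkGraph (f p.1).injective (hfW p.1) p.2⟩, blockerReps k p.1.1)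
  have hΦ : Φ.Injective := by
    rintro ⟨G₁, g₁⟩ ⟨G₂, g₂⟩ h
    simp only [Φ, Prod.mk.injEq, Subtype.ext_iff] at h
    obtain ⟨hG, hW⟩ := h
    obtain rfl : G₁ = G₂ := Subtype.ext <| by
      have := congrArg₂ (fun X (W : Finset V) => X \ fromRel fun u v => u ∈ W ∧ v ∈ W) hG hW
      rwa [sup_linkGraph_sdiff (hGW G₁) (hfW G₁), sup_linkGraph_sdiff (hGW G₂) (hfW G₂)] at this
    refine Prod.ext rfl (funext fun i => ?_)
    have adj := sup_linkGraph_adj_iff (f G₁).injective (hGW G₁) (hfW G₁)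
    exact ((adj g₂ i (g₁ i)).1 (hG ▸ (adj g₁ i (g₁ i)).2 rfl)).symm
  simpa [Nat.card_prod, Nat.card_eq_fintype_card, Fintype.card_finset] using
    Nat.card_le_card_of_injective Φ hΦ

end ManyComponents

section FewComponents

variable {r : V} {X : Finset V}

def fanGraph (r : V) (X : Finset V) : SimpleGraph V := fromRel fun u v => u = r ∧ v ∈ X

lemma outside_sup_fanGraph {B : Set V} (hr : r ∈ B) :
    (G ⊔ fanGraph r X).outside B = G.outside B := by
  rw [outside_sup, outside_eq_bot (H := fanGraph r X), sup_bot_eq]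
  rintro u v ⟨-, ⟨rfl, -⟩ | ⟨rfl, -⟩⟩
  exacts [.inl hr, .inr hr]

lemma IsBlocker.sup_fanGraph {B : Set V} (hB : IsBlocker G B) (hr : r ∈ B) (X : Finset V) :
    IsBlocker (G ⊔ fanGraph r X) B := by
  rwa [isBlocker_iff_isAcyclic_outside, outside_sup_fanGraph hr, ← isBlocker_iff_isAcyclic_outside]

lemma sup_fanGraph_sdiff (hX : ∀ x ∈ X, x ∉ (G.connectedComponentMk r).supp) :
    (G ⊔ fanGraph r X) \ fromRel (fun u v => u ∈ (G.connectedComponentMk r).supp ∧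
      v ∉ (G.connectedComponentMk r).supp) = G := by
  refine sup_sdiff_eq_left_of_disjoint (disjoint_left.2 fun u v huv h => ?_) ?_
  · simp only [fromRel_adj, ConnectedComponent.mem_supp_iff,
      ConnectedComponent.connectedComponentMk_eq_of_adj huv] at h
    tauto
  · rintro u v ⟨huv, ⟨rfl, hv⟩ | ⟨rfl, hu⟩⟩
    · exact (fromRel_adj _ _ _).2 ⟨huv, .inl ⟨rfl, hX v hv⟩⟩
    · exact (fromRel_adj _ _ _).2 ⟨huv, .inr ⟨rfl, hX u hu⟩⟩

lemma sup_fanGraph_adj_iff {x : V} (hx : x ∉ (G.connectedComponentMk r).supp) :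
    (G ⊔ fanGraph r X).Adj r x ↔ x ∈ X := by
  have hrx : r ≠ x := by rintro rfl; exact hx rfl
  refine ⟨fun h => ?_, fun h => .inr ⟨hrx, .inl ⟨rfl, h⟩⟩⟩
  obtain h | ⟨-, ⟨-, h⟩ | ⟨rfl, -⟩⟩ := h
  · exact absurd ((ConnectedComponent.connectedComponentMk_eq_of_adj h).symm) hx
  · exact h
  · exact absurd rfl hrx

variable [DecidableEq V]

/-- Which elements of `W` lie in `S`, recorded by their positions in `W.toList`. -/
noncomputable def markCode (W : Finset V) (S : Set V) : Finset ℕ := by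
  classical exact (W.filter (· ∈ S)).image W.toList.idxOf

lemma idxOf_mem_markCode {W : Finset V} {S : Set V} {w : V} (hw : w ∈ W) :
    W.toList.idxOf w ∈ markCode W S ↔ w ∈ S := by
  classical
  simp only [markCode, Finset.mem_image, Finset.mem_filter]
  refine ⟨fun ⟨w', ⟨hw', hS⟩, h⟩ => ?_, fun h => ⟨w, ⟨hw, h⟩, rfl⟩⟩
  rwa [← (List.idxOf_inj (Finset.mem_toList.2 hw')).1 h]

lemma markCode_subset_range (W : Finset V) (S : Set V) : markCode W S ⊆ Finset.range W.card := by
  classical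
  intro i hi
  obtain ⟨w, hw, rfl⟩ := Finset.mem_image.1 hi
  simpa using List.idxOf_lt_length_iff.2 (Finset.mem_toList.2 (Finset.mem_filter.1 hw).1)

variable [Fintype V]

open Classical in
lemma mem_supp_iff_markCode (C : G.ConnectedComponent) (B : Finset V) :
    v ∈ C.supp ↔ v ∈ B.filter (· ∈ C.supp) ∨ v ∉ B ∧
      (compReps (G.outside B) B).toList.idxOf (compRep (G.outside B) v) ∈
        markCode (compReps (G.outside B) B) C.supp := by
  by_cases hv : v ∈ B
  · simp [hv]
  · rw [idxOf_mem_markCode (compRep_mem_compReps hv), ConnectedComponent.mem_supp_iff,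
      ConnectedComponent.mem_supp_iff, ConnectedComponent.eq.2
        ((reachable_compRep _ v).mono (outside_le (B := ↑B)))]
    simp [hv]

open Classical in
lemma eq_of_sup_fanGraph_eq {G₁ G₂ : SimpleGraph V} {B₁ B₂ : Finset V} {r₁ r₂ : V}
    {X₁ X₂ : Finset V} (hr₁ : r₁ ∈ B₁) (hr₂ : r₂ ∈ B₂)
    (hX₁ : ∀ x ∈ X₁, x ∉ (G₁.connectedComponentMk r₁).supp)
    (hX₂ : ∀ x ∈ X₂, x ∉ (G₂.connectedComponentMk r₂).supp)
    (hG : G₁ ⊔ fanGraph r₁ X₁ = G₂ ⊔ fanGraph r₂ X₂) (hB : B₁ = B₂)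
    (hBT : B₁.filter (· ∈ (G₁.connectedComponentMk r₁).supp) =
      B₂.filter (· ∈ (G₂.connectedComponentMk r₂).supp))
    (hcode : markCode (compReps (G₁.outside B₁) B₁) (G₁.connectedComponentMk r₁).supp =
      markCode (compReps (G₂.outside B₂) B₂) (G₂.connectedComponentMk r₂).supp) :
    G₁ = G₂ := by
  subst hB
  have hO : G₁.outside ↑B₁ = G₂.outside ↑B₁ := by
    rw [← outside_sup_fanGraph (X := X₁) hr₁, hG, outside_sup_fanGraph hr₂]
  have hT : (G₁.connectedComponentMk r₁).supp = (G₂.connectedComponentMk r₂).supp := by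
    ext v
    rw [mem_supp_iff_markCode _ B₁, mem_supp_iff_markCode _ B₁, hcode, hBT, hO]
  have := congrArg₂ (fun X (S : Set V) => X \ fromRel fun u v => u ∈ S ∧ v ∉ S) hG hT
  rwa [sup_fanGraph_sdiff hX₁, sup_fanGraph_sdiff hX₂] at this

theorem card_few_components_mul_le [Nonempty V] (k q : ℕ) :
    Nat.card {G : SimpleGraph V //
        (IsApex k G ∧ CycleOffLargest G) ∧ (blockerReps k G).card < 2 * q} *
        2 ^ (Fintype.card V - Fintype.card V / 2) ≤
      Nat.card {G : SimpleGraph V // IsApex k G} *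
        (Nat.card {S : Finset V // S.card ≤ k} ^ 2 * 2 ^ (2 * q)) := by
  classical
  set Dom := {G : SimpleGraph V //
    (IsApex k G ∧ CycleOffLargest G) ∧ (blockerReps k G).card < 2 * q}
  choose r hrB hr using fun G : Dom =>
    G.2.1.2.exists_mem_two_mul_ncard_supp_le G.2.1.1.blocker_spec.2
  choose e he using fun G : Dom =>
    (G.1.connectedComponentMk (r G)).exists_embedding_notMem_supp (hr G)
  have hX (G : Dom) (X : Finset _) :
      ∀ x ∈ X.map (e G), x ∉ (G.1.connectedComponentMk (r G)).supp := by
    simpa using fun i _ => he G i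
  let Φ (p : Dom × Finset (Fin (Fintype.card V - Fintype.card V / 2))) :
      {G : SimpleGraph V // IsApex k G} × {S : Finset V // S.card ≤ k} ×
        {S : Finset V // S.card ≤ k} × (Finset.range (2 * q)).powerset :=
    (⟨p.1.1 ⊔ fanGraph (r p.1) (p.2.map (e p.1)), blocker k p.1.1, p.1.2.1.1.blocker_spec.1,
        p.1.2.1.1.blocker_spec.2.sup_fanGraph (hrB p.1) _⟩,
      ⟨blocker k p.1.1, p.1.2.1.1.blocker_spec.1⟩,
      ⟨(blocker k p.1.1).filter (· ∈ (p.1.1.connectedComponentMk (r p.1)).supp),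
        (Finset.card_filter_le _ _).trans p.1.2.1.1.blocker_spec.1⟩,
      ⟨markCode (blockerReps k p.1.1) (p.1.1.connectedComponentMk (r p.1)).supp,
        Finset.mem_powerset.2
          ((markCode_subset_range _ _).trans (Finset.range_subset_range.2 p.1.2.2.le))⟩)
  have hΦ : Φ.Injective := by
    rintro ⟨G₁, X₁⟩ ⟨G₂, X₂⟩ h
    simp only [Φ, Prod.mk.injEq, Subtype.ext_iff] at h
    obtain ⟨hG, hB, hBT, hcode⟩ := h
    obtain rfl : G₁ = G₂ := Subtype.ext <|
      eq_of_sup_fanGraph_eq (hrB G₁) (hrB G₂) (hX G₁ X₁) (hX G₂ X₂) hG hB hBT hcode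
    refine Prod.ext rfl (Finset.ext fun i => ?_)
    rw [← Finset.mem_map' (e G₁), ← sup_fanGraph_adj_iff (he G₁ i), hG,
      sup_fanGraph_adj_iff (he G₁ i), Finset.mem_map']
  have key := Nat.card_le_card_of_injective Φ hΦ
  rw [Nat.card_prod, Nat.card_prod, Nat.card_prod, Nat.card_prod, Nat.card_eq_fintype_card
    (α := Finset _), Fintype.card_finset, Fintype.card_fin, Nat.card_eq_finsetCard,
    Finset.card_powerset, Finset.card_range] at key
  simpa [pow_two, mul_assoc] using key

end FewComponents

lemma Nat.card_subtype_le_card_add_card {α : Type*} [Finite α] {p q r : α → Prop}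
    (h : ∀ a, p a → q a ∨ r a) :
    Nat.card {a // p a} ≤ Nat.card {a // q a} + Nat.card {a // r a} :=
  calc Nat.card {a // p a} = {a | p a}.ncard := Nat.card_coe_set_eq _
  _ ≤ ({a | q a} ∪ {a | r a}).ncard := Set.ncard_le_ncard h
  _ ≤ {a | q a}.ncard + {a | r a}.ncard := Set.ncard_union_le _ _

lemma le_of_mul_le_mul_of_mul_le {a b x y z : ℕ} (h : a * x ≤ b * y) (hyz : y * z ≤ x)
    (hy : 0 < y) : a * z ≤ b :=
  Nat.le_of_mul_le_mul_right (by nlinarith [Nat.mul_le_mul_left a hyz]) hy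

lemma eventually_mul_pow_le_two_pow (C a : ℕ) : ∀ᶠ m in atTop, C * (m + 1) ^ a ≤ 2 ^ m := by
  have h := (tendsto_pow_const_div_const_pow_of_one_lt a one_lt_two).comp (tendsto_add_atTop_nat 1)
  filter_upwards [h.eventually (ge_mem_nhds (show (0 : ℝ) < 1 / (2 * (C + 1)) by positivity))]
    with m hm
  simp only [Function.comp, Nat.cast_add, Nat.cast_one] at hm
  rw [div_le_div_iff₀ (by positivity) (by positivity), pow_succ] at hm
  have hX : (0 : ℝ) ≤ ((m : ℝ) + 1) ^ a := by positivity
  exact_mod_cast (by linarith : (C : ℝ) * ((m : ℝ) + 1) ^ a ≤ 2 ^ m)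

lemma eventually_two_pow_mul_le_pow_self :
    ∀ᶠ n : ℕ in atTop, 2 ^ n * 2 ^ (n / 8 + 1 + 1) ≤ (n / 8 + 1) ^ (n / 8 + 1) := by
  filter_upwards [eventually_ge_atTop (8 * 1024)] with n hn
  calc 2 ^ n * 2 ^ (n / 8 + 1 + 1) ≤ 2 ^ (10 * (n / 8 + 1)) := by
        rw [← pow_add]; exact Nat.pow_le_pow_right two_pos (by omega)
  _ = (2 ^ 10) ^ (n / 8 + 1) := by rw [pow_mul]
  _ ≤ (n / 8 + 1) ^ (n / 8 + 1) := Nat.pow_le_pow_left (by omega) _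

lemma eventually_sq_mul_two_pow_le_two_pow (k : ℕ) :
    ∀ᶠ n : ℕ in atTop, ((k + 1) * (n + 1) ^ k) ^ 2 * 2 ^ (2 * (n / 8 + 1)) *
      2 ^ (n / 8 + 1 + 1) ≤ 2 ^ (n - n / 2) := by
  filter_upwards [(Nat.tendsto_div_const_atTop (by norm_num : 8 ≠ 0)).eventually
    (eventually_mul_pow_le_two_pow (16 * (k + 1) ^ 2 * 8 ^ (2 * k)) (2 * k))] with n hn
  have hn1 : (n + 1) ^ (2 * k) ≤ 8 ^ (2 * k) * (n / 8 + 1) ^ (2 * k) := by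
    rw [← mul_pow]; exact Nat.pow_le_pow_left (by omega) _
  calc ((k + 1) * (n + 1) ^ k) ^ 2 * 2 ^ (2 * (n / 8 + 1)) * 2 ^ (n / 8 + 1 + 1)
      = (k + 1) ^ 2 * (n + 1) ^ (2 * k) * 16 * 2 ^ (3 * (n / 8)) := by ring
  _ ≤ 16 * (k + 1) ^ 2 * 8 ^ (2 * k) * (n / 8 + 1) ^ (2 * k) * 2 ^ (3 * (n / 8)) := by
        nlinarith [Nat.zero_le ((k + 1) ^ 2 * 2 ^ (3 * (n / 8)))]
  _ ≤ 2 ^ (n / 8) * 2 ^ (3 * (n / 8)) := Nat.mul_le_mul_right _ hn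
  _ ≤ 2 ^ (n - n / 2) := by rw [← pow_add]; exact Nat.pow_le_pow_right two_pos (by omega)

lemma eventually_card_cycleOffLargest_mul_le (k : ℕ) :
    ∀ᶠ n in atTop, Nat.card {G : SimpleGraph (Fin n) // IsApex k G ∧ CycleOffLargest G} *
      2 ^ (n / 8 + 1) ≤ apexCount n k := by
  filter_upwards [eventually_two_pow_mul_le_pow_self, eventually_sq_mul_two_pow_le_two_pow k,
    eventually_ge_atTop 1] with n hlarge hsmall hn
  have : Nonempty (Fin n) := ⟨⟨0, hn⟩⟩
  have hsplit := Nat.card_subtype_le_card_add_card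
    (p := fun G : SimpleGraph (Fin n) => IsApex k G ∧ CycleOffLargest G)
    (q := fun G => (IsApex k G ∧ CycleOffLargest G) ∧ (blockerReps k G).card < 2 * (n / 8 + 1))
    (r := fun G => IsApex k G ∧ 2 * (n / 8 + 1) ≤ (blockerReps k G).card)
    fun G hG => (lt_or_ge _ _).imp (⟨hG, ·⟩) (⟨hG.1, ·⟩)
  have hfew := card_few_components_mul_le (V := Fin n) k (n / 8 + 1)
  have hmany := card_many_components_mul_le (V := Fin n) k (n / 8 + 1)
  have hS := card_finset_card_le_le (V := Fin n) k
  have hS0 : 0 < Nat.card {S : Finset (Fin n) // S.card ≤ k} :=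
    have : Nonempty {S : Finset (Fin n) // S.card ≤ k} := ⟨⟨∅, by simp⟩⟩
    Nat.card_pos
  have hA : Nat.card {G : SimpleGraph (Fin n) // IsApex k G} = apexCount n k := rfl
  simp only [Fintype.card_fin, hA] at hfew hmany hS
  have hfew' := le_of_mul_le_mul_of_mul_le hfew (le_trans (by gcongr) hsmall) (by positivity)
  have hmany' := le_of_mul_le_mul_of_mul_le hmany hlarge (by positivity)
  refine Nat.le_of_mul_le_mul_right (c := 2) ?_ two_pos
  calc _ = Nat.card {G : SimpleGraph (Fin n) // IsApex k G ∧ CycleOffLargest G} *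
        2 ^ (n / 8 + 1 + 1) := by ring
  _ ≤ _ := Nat.mul_le_mul_right _ hsplit
  _ ≤ apexCount n k * 2 := by rw [add_mul]; omega

theorem stmt_17_general (k : ℕ) :
    ∃ c : ℝ, 0 < c ∧ ∃ n0 : ℕ, ∀ n ≥ n0,
      (Nat.card {G : SimpleGraph (Fin n) //
          (∃ B : Finset (Fin n), B.card ≤ k ∧ IsBlocker G ↑B) ∧
          ∀ H : G.ConnectedComponent,
            (∀ H' : G.ConnectedComponent, H'.supp.ncard ≤ H.supp.ncard) →
            ¬ (G.induce H.suppᶜ).IsAcyclic} : ℝ)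
        ≤ Real.exp (-c * n) * (apexCount n k : ℝ) := by
  obtain ⟨n0, hn0⟩ := eventually_atTop.1 (eventually_card_cycleOffLargest_mul_le k)
  refine ⟨Real.log 2 / 8, by positivity, n0, fun n hn => ?_⟩
  have hcard : Nat.card {G : SimpleGraph (Fin n) // IsApex k G ∧ CycleOffLargest G} *
      2 ^ (n / 8 + 1) ≤ apexCount n k := hn0 n hn
  have hexp : Real.exp (Real.log 2 / 8 * n) ≤ 2 ^ (n / 8 + 1) := by
    have : (n : ℝ) ≤ 8 * ((n / 8 + 1 : ℕ) : ℝ) := by exact_mod_cast (by omega : n ≤ 8 * (n / 8 + 1))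
    calc Real.exp (Real.log 2 / 8 * n) ≤ Real.exp ((n / 8 + 1 : ℕ) * Real.log 2) :=
          Real.exp_le_exp.2 (by nlinarith [Real.log_pos one_lt_two])
    _ = 2 ^ (n / 8 + 1) := by rw [Real.exp_nat_mul, Real.exp_log two_pos]
  calc _ ≤ (apexCount n k : ℝ) / 2 ^ (n / 8 + 1) := by
        rw [le_div_iff₀ (by positivity)]; exact_mod_cast hcard
  _ ≤ apexCount n k / Real.exp (Real.log 2 / 8 * n) :=
        div_le_div_of_nonneg_left (by positivity) (Real.exp_pos _) hexp
  _ = _ := by rw [neg_mul, Real.exp_neg, div_eq_mul_inv, mul_comm]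

/-- with probability 1 − e^{-Ω(n)}, for a uniformly random graph from
(Apex^k F)_n the graph induced outside a largest component is a forest. -/
theorem stmt_17 (k : ℕ) (hk : 1 ≤ k) :
    ∃ c : ℝ, 0 < c ∧ ∃ n0 : ℕ, ∀ n ≥ n0,
      (Nat.card {G : SimpleGraph (Fin n) //
          (∃ B : Finset (Fin n), B.card ≤ k ∧ IsBlocker G ↑B) ∧
          ∀ H : G.ConnectedComponent,
            (∀ H' : G.ConnectedComponent, H'.supp.ncard ≤ H.supp.ncard) →
            ¬ (G.induce H.suppᶜ).IsAcyclic} : ℝ)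
        ≤ Real.exp (-c * n) * (apexCount n k : ℝ) :=
  stmt_17_general k
end
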